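/- arXiv:2004.06576 — 9 statements merged into one kernel-verified Lean document; each statement's English description precedes it below -/
import Mathlib

section
/- Every endotactic reaction network is consistent; that is, if a finite set of edges E in R^d with source vectors s(e) and reaction vectors v(e) satisfies the endotactic condition (for every w in R^d and every e_i in E with w·v(e_i) < 0, there exists e_j in E with w·(s(e_j) - s(e_i)) < 0 and w·v(e_j) > 0), then there exist positive constants a_e > 0 for each e in E such that the sum over e of a_e v(e) equals 0. -/
/-- The dot product on `Fin d → ℝ`. -/
noncomputable def dotp {d : ℕ} (w u : Fin d → ℝ) : ℝ := ∑ i, w i * u i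

/-- A reaction network (edge set `E`, sources `s`, reaction vectors `v`) is endotactic. -/
def Endotactic {d : ℕ} {E : Type*} [Fintype E] (s v : E → (Fin d → ℝ)) : Prop :=
  ∀ w : Fin d → ℝ, ∀ ei : E, dotp w (v ei) < 0 →
    ∃ ej : E, dotp w (s ej - s ei) < 0 ∧ 0 < dotp w (v ej)

/-- A reaction network is consistent. -/
def Consistent {d : ℕ} {E : Type*} [Fintype E] (v : E → (Fin d → ℝ)) : Prop :=
  ∃ a : E → ℝ, (∀ e, 0 < a e) ∧ ∑ e, a e • v e = 0

open Matrix in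
lemma dotp_eq_dotProduct {d : ℕ} (w u : Fin d → ℝ) : dotp w u = w ⬝ᵥ u := rfl

open Matrix in
lemma dotProduct_finsum {d : ℕ} {ι : Type*} [Fintype ι] (z : Fin d → ℝ)
    (f : ι → Fin d → ℝ) : z ⬝ᵥ (∑ e, f e) = ∑ e, z ⬝ᵥ f e := by
  simp only [dotProduct, Finset.sum_apply, Finset.mul_sum]
  exact Finset.sum_comm

lemma continuous_finset_sup' {ι X : Type*} [TopologicalSpace X] (s : Finset ι)
    (hs : s.Nonempty) (f : ι → X → ℝ) (hf : ∀ i, Continuous (f i)) :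
    Continuous (fun x => s.sup' hs (fun i => f i x)) := by
  rw [continuous_iff_continuousAt]
  intro x
  exact ContinuousAt.finset_sup'_apply hs (fun i _ => (hf i).continuousAt)

open Matrix in
lemma continuous_dotProduct_left {d : ℕ} (u : Fin d → ℝ) :
    Continuous fun w : Fin d → ℝ => w ⬝ᵥ u := by
  show Continuous fun w : Fin d → ℝ => ∑ i, w i * u i
  exact continuous_finset_sum _ fun i _ => (continuous_apply i).mul continuous_const

open Matrix Real in
set_option maxHeartbeats 1000000 in
/-- Every endotactic reaction network is consistent. -/
theorem endotactic_consistent {d : ℕ} {E : Type*} [Fintype E]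
    (s v : E → (Fin d → ℝ)) (hv : ∀ e, v e ≠ 0)
    (h : Endotactic s v) : Consistent v := by
  classical
  by_cases hE : Nonempty E
  case neg =>
    haveI : IsEmpty E := not_nonempty_iff.mp hE
    exact ⟨fun _ => 1, fun e => (IsEmpty.false e).elim, by simp⟩
  haveI := hE
  haveI : Nonempty (Fin d → ℝ) := ⟨0⟩
  -- key consequence of endotacticity
  have hkey : ∀ w : Fin d → ℝ, (∀ e, w ⬝ᵥ v e ≤ 0) → ∀ e, w ⬝ᵥ v e = 0 := by
    intro w hw e
    by_contra hne
    have hlt : dotp w (v e) < 0 := lt_of_le_of_ne (hw e) hne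
    obtain ⟨ej, _, hpos⟩ := h w e hlt
    exact absurd (hw ej) (not_le.mpr hpos)
  set V : Submodule ℝ (Fin d → ℝ) := Submodule.span ℝ (Set.range v) with hV
  have hmemV : ∀ e, v e ∈ V := fun e => Submodule.subset_span ⟨e, rfl⟩
  have hperp : ∀ w : Fin d → ℝ, (∀ e, w ⬝ᵥ v e = 0) → ∀ x ∈ V, w ⬝ᵥ x = 0 := by
    intro w hw x hx
    induction hx using Submodule.span_induction with
    | mem x hxr => obtain ⟨e, rfl⟩ := hxr; exact hw e
    | zero => simp
    | add x y hx hy ihx ihy => rw [dotProduct_add, ihx, ihy, add_zero]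
    | smul a x hx ihx => rw [dotProduct_smul, ihx, smul_zero]
  have hVclosed : IsClosed (V : Set (Fin d → ℝ)) := V.closed_of_finiteDimensional
  -- the max function
  have huniv : (Finset.univ : Finset E).Nonempty := Finset.univ_nonempty
  set m : (Fin d → ℝ) → ℝ := fun w => Finset.univ.sup' huniv (fun e => w ⬝ᵥ v e) with hm
  have hmcont : Continuous m :=
    continuous_finset_sup' _ huniv (fun e w => w ⬝ᵥ v e)
      (fun e => continuous_dotProduct_left (v e))
  have hm_le : ∀ (w : Fin d → ℝ) (e : E), w ⬝ᵥ v e ≤ m w := fun w e =>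
    Finset.le_sup' (fun e => w ⬝ᵥ v e) (Finset.mem_univ e)
  have hm_ex : ∀ w : Fin d → ℝ, ∃ e, m w = w ⬝ᵥ v e := by
    intro w
    obtain ⟨e, _, he⟩ := Finset.exists_mem_eq_sup' huniv (fun e => w ⬝ᵥ v e)
    exact ⟨e, he⟩
  -- positivity of m on the unit sphere of V
  have hmpos : ∀ w : Fin d → ℝ, w ∈ V → ‖w‖ = 1 → 0 < m w := by
    intro w hwV hwn
    by_contra hle
    push_neg at hle
    have hall : ∀ e, w ⬝ᵥ v e ≤ 0 := fun e => (hm_le w e).trans hle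
    have hzero := hkey w hall
    have : w ⬝ᵥ w = 0 := hperp w hzero w hwV
    have hw0 : w = 0 := dotProduct_self_eq_zero.mp this
    rw [hw0, norm_zero] at hwn
    exact one_ne_zero hwn.symm
  -- compactness of the unit sphere of V, minimum δ of m
  have hScompact : IsCompact ((V : Set (Fin d → ℝ)) ∩ Metric.sphere 0 1) :=
    (isCompact_sphere (0 : Fin d → ℝ) 1).inter_left hVclosed
  have hSne : ((V : Set (Fin d → ℝ)) ∩ Metric.sphere 0 1).Nonempty := by
    obtain ⟨e⟩ := hE
    refine ⟨(‖v e‖ : ℝ)⁻¹ • v e, V.smul_mem _ (hmemV e), ?_⟩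
    simp only [Metric.mem_sphere, dist_zero_right]
    exact norm_smul_inv_norm (𝕜 := ℝ) (hv e)
  obtain ⟨w₁, hw₁S, hw₁min⟩ := hScompact.exists_isMinOn hSne hmcont.continuousOn
  set δ : ℝ := m w₁ with hδ
  have hδpos : 0 < δ := hmpos w₁ hw₁S.1 (by simpa [dist_zero_right] using hw₁S.2)
  -- coercivity : δ * ‖w‖ ≤ m w on V
  have hcoer : ∀ w : Fin d → ℝ, w ∈ V → δ * ‖w‖ ≤ m w := by
    intro w hwV
    rcases eq_or_ne w 0 with rfl | hw0
    · simp only [norm_zero, mul_zero]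
      obtain ⟨e, he⟩ := hm_ex (0 : Fin d → ℝ)
      rw [he, zero_dotProduct]
    · have hc : (0 : ℝ) < ‖w‖ := norm_pos_iff.mpr hw0
      set u : Fin d → ℝ := (‖w‖ : ℝ)⁻¹ • w with hu
      have huV : u ∈ V := V.smul_mem _ hwV
      have hun : ‖u‖ = 1 := norm_smul_inv_norm (𝕜 := ℝ) hw0
      have huS : u ∈ (V : Set (Fin d → ℝ)) ∩ Metric.sphere 0 1 :=
        ⟨huV, by simpa [dist_zero_right] using hun⟩
      have hδu : δ ≤ m u := hw₁min huS
      obtain ⟨e, he⟩ := hm_ex u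
      have hwu : w = ‖w‖ • u := by
        rw [hu, smul_smul, mul_inv_cancel₀ hc.ne', one_smul]
      have hwve : w ⬝ᵥ v e = ‖w‖ * (u ⬝ᵥ v e) := by
        conv_lhs => rw [hwu]
        rw [smul_dotProduct, smul_eq_mul]
      calc δ * ‖w‖ ≤ m u * ‖w‖ := by nlinarith
        _ = w ⬝ᵥ v e := by rw [hwve, he]; ring
        _ ≤ m w := hm_le w e
  -- the function F
  set F : (Fin d → ℝ) → ℝ := fun w => ∑ e, Real.exp (w ⬝ᵥ v e) with hF
  have hFcont : Continuous F :=
    continuous_finset_sum _ (fun e _ =>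
      Real.continuous_exp.comp (continuous_dotProduct_left (v e)))
  have hFlb : ∀ w : Fin d → ℝ, w ∈ V → Real.exp (δ * ‖w‖) ≤ F w := by
    intro w hwV
    obtain ⟨e, he⟩ := hm_ex w
    calc Real.exp (δ * ‖w‖) ≤ Real.exp (w ⬝ᵥ v e) := by
          rw [Real.exp_le_exp, ← he]; exact hcoer w hwV
      _ ≤ F w := Finset.single_le_sum (f := fun e => Real.exp (w ⬝ᵥ v e))
          (fun e _ => (Real.exp_pos _).le) (Finset.mem_univ e)
  have hF0pos : (0 : ℝ) < F 0 :=
    Finset.sum_pos (fun e _ => Real.exp_pos _) huniv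
  -- compact sublevel set
  set K : Set (Fin d → ℝ) := (V : Set (Fin d → ℝ)) ∩ F ⁻¹' Set.Iic (F 0) with hK
  have hKclosed : IsClosed K := hVclosed.inter (isClosed_Iic.preimage hFcont)
  have hKbdd : Bornology.IsBounded K := by
    rw [isBounded_iff_forall_norm_le]
    refine ⟨Real.log (F 0) / δ, ?_⟩
    rintro w ⟨hwV, hwF⟩
    have h1 : Real.exp (δ * ‖w‖) ≤ F 0 := (hFlb w hwV).trans hwF
    have h2 : δ * ‖w‖ ≤ Real.log (F 0) :=
      (Real.le_log_iff_exp_le hF0pos).mpr h1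
    rw [le_div_iff₀ hδpos, mul_comm]
    exact h2
  have hKcompact : IsCompact K :=
    Metric.isCompact_of_isClosed_isBounded hKclosed hKbdd
  have hKne : K.Nonempty := ⟨0, V.zero_mem, Set.mem_preimage.mpr (Set.mem_Iic.mpr le_rfl)⟩
  obtain ⟨w₀, hw₀K, hw₀min⟩ := hKcompact.exists_isMinOn hKne hFcont.continuousOn
  -- w₀ minimizes F on all of V
  have hminV : ∀ w : Fin d → ℝ, w ∈ V → F w₀ ≤ F w := by
    intro w hwV
    by_cases hw : F w ≤ F 0
    · exact hw₀min ⟨hwV, hw⟩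
    · exact le_trans (hw₀min ⟨V.zero_mem, Set.mem_preimage.mpr (Set.mem_Iic.mpr le_rfl)⟩) (le_of_not_ge hw)
  -- gradient condition
  have hgrad : ∀ u : Fin d → ℝ, u ∈ V →
      ∑ e, Real.exp (w₀ ⬝ᵥ v e) * (u ⬝ᵥ v e) = 0 := by
    intro u huV
    set g : ℝ → ℝ := fun t => ∑ e, Real.exp (w₀ ⬝ᵥ v e + t * (u ⬝ᵥ v e)) with hg
    have hgF : ∀ t : ℝ, g t = F (w₀ + t • u) := by
      intro t
      refine Finset.sum_congr rfl (fun e _ => ?_)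
      rw [add_dotProduct, smul_dotProduct, smul_eq_mul]
    have hloc : IsLocalMin g 0 := by
      apply Filter.Eventually.of_forall
      intro t
      rw [hgF t, hgF 0]
      simp only [zero_smul, add_zero]
      exact hminV _ (V.add_mem hw₀K.1 (V.smul_mem t huV))
    have hder : HasDerivAt g (∑ e, Real.exp (w₀ ⬝ᵥ v e + 0 * (u ⬝ᵥ v e)) *
        (u ⬝ᵥ v e)) 0 := by
      apply HasDerivAt.fun_sum
      intro e _
      have h1 : HasDerivAt (fun t : ℝ => w₀ ⬝ᵥ v e + t * (u ⬝ᵥ v e))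
          (u ⬝ᵥ v e) 0 := by
        simpa using (((hasDerivAt_id (0 : ℝ)).mul_const (u ⬝ᵥ v e)).const_add
          (w₀ ⬝ᵥ v e))
      simpa using h1.exp
    have hd0 : deriv g 0 = 0 := hloc.deriv_eq_zero
    rw [hder.deriv] at hd0
    simpa using hd0
  -- conclude
  set a : E → ℝ := fun e => Real.exp (w₀ ⬝ᵥ v e) with ha
  refine ⟨a, fun e => Real.exp_pos _, ?_⟩
  set z : Fin d → ℝ := ∑ e, a e • v e with hz
  have hzV : z ∈ V := Submodule.sum_mem _ (fun e _ => V.smul_mem _ (hmemV e))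
  have hzz : z ⬝ᵥ z = 0 := by
    have h1 := hgrad z hzV
    have h2 : z ⬝ᵥ z = ∑ e, Real.exp (w₀ ⬝ᵥ v e) * (z ⬝ᵥ v e) := by
      rw [hz]
      rw [dotProduct_finsum]
      exact Finset.sum_congr rfl (fun e _ => by
        rw [dotProduct_smul, smul_eq_mul])
    rw [h2, h1]
  exact dotProduct_self_eq_zero.mp hzz
end

section
/- Every weakly reversible reaction network is consistent: if every edge of a Euclidean embedded graph lies on a directed cycle, then there exist positive constants a_e > 0 for each edge e such that sum over edges e of a_e v(e) = 0, where v(e) = t(e) - s(e). -/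
/-- Weak reversibility: every edge is contained in a directed cycle of edges
`e = c 0, c 1, …, c n` where the target of each edge is the source of the next,
and the target of the last is the source of the first. -/
def WeaklyReversible {d : ℕ} {E : Type*} [Fintype E] (s t : E → (Fin d → ℝ)) : Prop :=
  ∀ e : E, ∃ (n : ℕ) (c : Fin (n + 1) → E), c 0 = e ∧
    (∀ i : Fin n, t (c i.castSucc) = s (c i.succ)) ∧ t (c (Fin.last n)) = s (c 0)

/-- Every weakly reversible reaction network is consistent: there are positive
constants `a e` with `∑ e, a e • (t e - s e) = 0`. -/
theorem weaklyReversible_consistent {d : ℕ} {E : Type*} [Fintype E]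
    (s t : E → (Fin d → ℝ)) (hv : ∀ e, t e - s e ≠ 0)
    (h : WeaklyReversible s t) :
    ∃ a : E → ℝ, (∀ e, 0 < a e) ∧ ∑ e, a e • (t e - s e) = 0 := by
  classical
  choose n c h0 hmid hlast using h
  set w : E → E → ℝ := fun e f =>
    ((Finset.univ.filter fun i : Fin (n e + 1) => c e i = f).card : ℝ) with hw
  have hwnn : ∀ e f, 0 ≤ w e f := fun e f => Nat.cast_nonneg _
  have hwe : ∀ e, 1 ≤ w e e := by
    intro e
    have : (0 : Fin (n e + 1)) ∈ Finset.univ.filter fun i => c e i = e := by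
      simp [h0 e]
    have hc : 1 ≤ (Finset.univ.filter fun i : Fin (n e + 1) => c e i = e).card :=
      Finset.card_pos.mpr ⟨0, this⟩
    simp only [hw]; exact_mod_cast hc
  have key : ∀ e, ∑ f, w e f • (t f - s f) = 0 := by
    intro e
    have step : ∀ f, w e f • (t f - s f)
        = ∑ i ∈ Finset.univ.filter fun i : Fin (n e + 1) => c e i = f,
            (t (c e i) - s (c e i)) := by
      intro f
      rw [Finset.sum_congr rfl (fun i hi => by
        rw [(Finset.mem_filter.mp hi).2]), Finset.sum_const, hw]
      simp [Nat.cast_smul_eq_nsmul ℝ]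
    calc ∑ f, w e f • (t f - s f)
        = ∑ f, ∑ i ∈ Finset.univ.filter fun i : Fin (n e + 1) => c e i = f,
            (t (c e i) - s (c e i)) := Finset.sum_congr rfl fun f _ => step f
      _ = ∑ i : Fin (n e + 1), (t (c e i) - s (c e i)) :=
            Finset.sum_fiberwise _ _ _
      _ = ∑ i : Fin (n e + 1), t (c e i) - ∑ i : Fin (n e + 1), s (c e i) :=
            Finset.sum_sub_distrib _ _
      _ = 0 := by
            have : ∀ i : Fin (n e + 1), t (c e i) = s (c e (finRotate (n e + 1) i)) := by
              intro i
              induction i using Fin.lastCases with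
              | last => rw [finRotate_last, hlast e]
              | cast j =>
                  rw [hmid e j]
                  congr 1
                  simp [finRotate_succ_apply, Fin.coeSucc_eq_succ]
            rw [Finset.sum_congr rfl fun i _ => this i,
              Equiv.sum_comp (finRotate (n e + 1)) (fun i => s (c e i)), sub_self]
  refine ⟨fun f => ∑ e, w e f, ?_, ?_⟩
  · intro f
    have : (1:ℝ) ≤ ∑ e, w e f :=
      le_trans (hwe f) (Finset.single_le_sum (fun e _ => hwnn e f) (Finset.mem_univ f))
    linarith
  · calc ∑ f, (∑ e, w e f) • (t f - s f)
        = ∑ f, ∑ e, w e f • (t f - s f) := by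
          refine Finset.sum_congr rfl fun f _ => ?_
          rw [Finset.sum_smul]
      _ = ∑ e, ∑ f, w e f • (t f - s f) := Finset.sum_comm
      _ = 0 := by simp [key]
end

section
/- Sufficient direction of the dynamical inclusion criterion: Let G_1 and G_2 be reaction networks in R^d. Suppose (i) every source vector of G_2 is a source vector of G_1, and (ii) for every source vector s of G_1, the relative interior of the cone V^{G_2}(s) generated by the reaction vectors of G_2 with source s is contained in the relative interior of the cone V^{G_1}(s) generated by the reaction vectors of G_1 with source s (taking the cone to be {0} if s is not a source of the network). Then for every assignment of positive rate constants k^2 to the edges of G_2, there exists an assignment of positive rate constants k^1 to the edges of G_1 such that the polynomial vector fields f_{G_1(k^1)}(x) = sum over edges e of G_1 of k^1_e x^{s(e)} v(e) and f_{G_2(k^2)}(x) = sum over edges e of G_2 of k^2_e x^{s(e)} v(e) are equal as functions of x in R^d_{>0}. -/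
/-- The cone `V^G(s₀)` generated by the reaction vectors of the network `(s, v)` whose
source vector equals `s₀` (equal to `{0}` if `s₀` is not a source). -/
def coneAt {d : ℕ} {E : Type*} [Fintype E] (s v : E → (Fin d → ℝ)) (s₀ : Fin d → ℝ) :
    Set (Fin d → ℝ) :=
  {x | ∃ c : E → ℝ, (∀ e, 0 ≤ c e) ∧ (∀ e, s e ≠ s₀ → c e = 0) ∧ x = ∑ e, c e • v e}

/-- The mass action vector field generated by the network `(s, v)` with rate constants `k`,
evaluated at `x`. -/
noncomputable def massAction {d : ℕ} {E : Type*} [Fintype E]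
    (s v : E → (Fin d → ℝ)) (k : E → ℝ) (x : Fin d → ℝ) : Fin d → ℝ :=
  ∑ e, (k e * ∏ i, x i ^ s e i) • v e

section Aux

variable {d : ℕ} {E : Type*} [Fintype E]

lemma zero_mem_coneAt (s v : E → (Fin d → ℝ)) (s₀ : Fin d → ℝ) :
    (0 : Fin d → ℝ) ∈ coneAt s v s₀ :=
  ⟨0, fun _ => le_refl 0, fun _ _ => rfl, by simp⟩

lemma gen_mem_coneAt (s v : E → (Fin d → ℝ)) {s₀ : Fin d → ℝ} {e : E} (he : s e = s₀) :
    v e ∈ coneAt s v s₀ := by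
  classical
  refine ⟨fun e' => if e' = e then 1 else 0, ?_, ?_, ?_⟩
  · intro e'; dsimp only; split <;> norm_num
  · intro e' h; by_cases h' : e' = e
    · subst h'; exact absurd he h
    · simp [h']
  · simp [ite_smul]

lemma affineSpan_coneAt (s v : E → (Fin d → ℝ)) (s₀ : Fin d → ℝ) :
    (affineSpan ℝ (coneAt s v s₀) : Set (Fin d → ℝ)) =
      (Submodule.span ℝ (v '' {e | s e = s₀}) : Set (Fin d → ℝ)) := by
  apply Set.Subset.antisymm
  · have hsub : coneAt s v s₀ ⊆ (Submodule.span ℝ (v '' {e | s e = s₀}) : Set (Fin d → ℝ)) := by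
      rintro y ⟨c, h0, hsupp, rfl⟩
      refine Submodule.sum_mem _ fun e _ => ?_
      by_cases h : s e = s₀
      · exact Submodule.smul_mem _ _ (Submodule.subset_span ⟨e, h, rfl⟩)
      · rw [hsupp e h]; simp
    intro x hx
    have h1 : x ∈ (Submodule.span ℝ (coneAt s v s₀) : Set (Fin d → ℝ)) :=
      affineSpan_subset_span hx
    exact Submodule.span_le.2 hsub h1
  · intro x hx
    have hdir : Submodule.span ℝ (v '' {e | s e = s₀}) ≤
        (affineSpan ℝ (coneAt s v s₀)).direction := by
      rw [Submodule.span_le]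
      rintro y ⟨e, he, rfl⟩
      have h1 : v e ∈ affineSpan ℝ (coneAt s v s₀) :=
        subset_affineSpan ℝ _ (gen_mem_coneAt s v he)
      have h2 : (0 : Fin d → ℝ) ∈ affineSpan ℝ (coneAt s v s₀) :=
        subset_affineSpan ℝ _ (zero_mem_coneAt s v s₀)
      simpa using AffineSubspace.vsub_mem_direction h1 h2
    have h0 : (0 : Fin d → ℝ) ∈ affineSpan ℝ (coneAt s v s₀) :=
      subset_affineSpan ℝ _ (zero_mem_coneAt s v s₀)
    simpa using AffineSubspace.vadd_mem_of_mem_direction (hdir hx) h0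

/-- A combination with coefficients that are positive exactly on the fiber over `s₀`
lies in the relative interior of the cone. -/
lemma posComb_mem_intrinsicInterior (s v : E → (Fin d → ℝ)) (s₀ : Fin d → ℝ)
    (k : E → ℝ) (hkpos : ∀ e, s e = s₀ → 0 < k e) (hk0 : ∀ e, s e ≠ s₀ → k e = 0) :
    (∑ e, k e • v e) ∈ intrinsicInterior ℝ (coneAt s v s₀) := by
  classical
  set W : Submodule ℝ (Fin d → ℝ) := Submodule.span ℝ (v '' {e | s e = s₀}) with hW
  -- the linear parametrization of the cone by coefficients
  set l : (E → ℝ) →ₗ[ℝ] (Fin d → ℝ) :=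
    { toFun := fun c => ∑ e, (if s e = s₀ then c e else 0) • v e
      map_add' := fun a b => by
        rw [← Finset.sum_add_distrib]
        refine Finset.sum_congr rfl fun e _ => ?_
        by_cases h : s e = s₀ <;> simp [h, add_smul]
      map_smul' := fun t a => by
        rw [RingHom.id_apply, Finset.smul_sum]
        refine Finset.sum_congr rfl fun e _ => ?_
        by_cases h : s e = s₀ <;> simp [h, smul_smul] } with hldef
  have hlapp : ∀ c : E → ℝ, l c = ∑ e, (if s e = s₀ then c e else 0) • v e := fun c => rfl
  have hlmem : ∀ c, l c ∈ W := by
    intro c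
    rw [hlapp]
    refine Submodule.sum_mem _ fun e _ => ?_
    by_cases h : s e = s₀
    · exact Submodule.smul_mem _ _ (Submodule.subset_span ⟨e, h, rfl⟩)
    · simp [h]
  have hlC : ∀ c : E → ℝ, (∀ e, 0 ≤ c e) → l c ∈ coneAt s v s₀ := by
    intro c hc
    refine ⟨fun e => if s e = s₀ then c e else 0, ?_, ?_, (hlapp c)⟩
    · intro e; dsimp only; split
      · exact hc e
      · exact le_refl 0
    · intro e h; simp [h]
  have hrange : LinearMap.range l = W := by
    apply le_antisymm
    · rintro x ⟨c, rfl⟩; exact hlmem c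
    · rw [hW, Submodule.span_le]
      rintro y ⟨e, he, rfl⟩
      refine ⟨fun e' => if e' = e then 1 else 0, ?_⟩
      rw [hlapp]
      rw [Finset.sum_eq_single_of_mem e (Finset.mem_univ e)]
      · have he' : s e = s₀ := he
        simp [he']
      · intro e' _ hne; simp [hne]
  set l' : (E → ℝ) →ₗ[ℝ] W := l.codRestrict W hlmem with hl'
  have hsurj : Function.Surjective l' := by
    rintro ⟨x, hx⟩
    rw [← hrange] at hx
    obtain ⟨c, hc⟩ := hx
    exact ⟨c, Subtype.ext hc⟩
  have hopenmap : IsOpenMap l' := l'.isOpenMap_of_finiteDimensional hsurj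
  have hΩ : IsOpen {c : E → ℝ | ∀ e, 0 < c e} := by
    have : {c : E → ℝ | ∀ e, 0 < c e} = Set.pi Set.univ (fun _ => Set.Ioi (0:ℝ)) := by
      ext c; simp [Set.mem_pi]
    rw [this]
    exact isOpen_set_pi Set.finite_univ (fun e _ => isOpen_Ioi)
  have himg : IsOpen (l' '' {c : E → ℝ | ∀ e, 0 < c e}) := hopenmap _ hΩ
  obtain ⟨U, hUopen, hUeq⟩ := isOpen_induced_iff.1 himg
  -- the point itself
  have hknn : ∀ e, 0 ≤ k e := by
    intro e
    by_cases h : s e = s₀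
    · exact (hkpos e h).le
    · rw [hk0 e h]
  have hwC : (∑ e, k e • v e) ∈ coneAt s v s₀ := ⟨k, hknn, hk0, rfl⟩
  set w : Fin d → ℝ := ∑ e, k e • v e with hwdef
  set c₀ : E → ℝ := fun e => if s e = s₀ then k e else 1 with hc₀
  have hc₀Ω : c₀ ∈ {c : E → ℝ | ∀ e, 0 < c e} := by
    intro e
    simp only [hc₀]
    split
    · exact hkpos e (by assumption)
    · norm_num
  have hlc₀ : l c₀ = w := by
    rw [hlapp, hwdef]
    refine Finset.sum_congr rfl fun e _ => ?_
    by_cases h : s e = s₀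
    · simp [hc₀, h]
    · simp [hc₀, h, hk0 e h]
  have hwU : w ∈ U := by
    have : l' c₀ ∈ l' '' {c : E → ℝ | ∀ e, 0 < c e} := Set.mem_image_of_mem _ hc₀Ω
    rw [← hUeq] at this
    have hval : (l' c₀ : Fin d → ℝ) = w := hlc₀
    simpa [hval] using this
  refine mem_intrinsicInterior.2 ⟨⟨w, subset_affineSpan ℝ _ hwC⟩, ?_, rfl⟩
  refine mem_interior.2 ⟨Subtype.val ⁻¹' U, ?_, hUopen.preimage continuous_subtype_val, hwU⟩
  intro z hz
  have hzW : (z : Fin d → ℝ) ∈ W := by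
    have hz2 : (z : Fin d → ℝ) ∈ (affineSpan ℝ (coneAt s v s₀) : Set (Fin d → ℝ)) := z.2
    rw [affineSpan_coneAt] at hz2
    exact hz2
  have hmem : (⟨(z : Fin d → ℝ), hzW⟩ : W) ∈ l' '' {c : E → ℝ | ∀ e, 0 < c e} := by
    rw [← hUeq]
    exact hz
  obtain ⟨c, hcΩ, hcz⟩ := hmem
  have hlcz : l c = (z : Fin d → ℝ) := congrArg Subtype.val hcz
  show (z : Fin d → ℝ) ∈ coneAt s v s₀
  rw [← hlcz]
  exact hlC c fun e => (hcΩ e).le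

/-- A point in the relative interior of the cone is a combination with coefficients
positive on the whole fiber over `s₀`. -/
lemma exists_pos_comb_of_mem_intrinsicInterior (s v : E → (Fin d → ℝ)) (s₀ : Fin d → ℝ)
    {w : Fin d → ℝ} (hw : w ∈ intrinsicInterior ℝ (coneAt s v s₀)) :
    ∃ c : E → ℝ, (∀ e, s e ≠ s₀ → c e = 0) ∧ (∀ e, s e = s₀ → 0 < c e) ∧
      ∑ e, c e • v e = w := by
  classical
  have hwC : w ∈ coneAt s v s₀ := intrinsicInterior_subset hw
  obtain ⟨y, hy, hyw⟩ := mem_intrinsicInterior.1 hw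
  -- the "center" of the cone
  set u : Fin d → ℝ := ∑ e, (if s e = s₀ then (1:ℝ) else 0) • v e with hu
  have huC : u ∈ coneAt s v s₀ := by
    refine ⟨fun e => if s e = s₀ then 1 else 0, ?_, ?_, rfl⟩
    · intro e; dsimp only; split <;> norm_num
    · intro e h; simp [h]
  have hmemSpan : ∀ t : ℝ, t • (w - u) + w ∈ affineSpan ℝ (coneAt s v s₀) := by
    intro t
    have := AffineSubspace.smul_vsub_vadd_mem (affineSpan ℝ (coneAt s v s₀)) t
      (subset_affineSpan ℝ _ hwC) (subset_affineSpan ℝ _ huC) (subset_affineSpan ℝ _ hwC)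
    simpa [vsub_eq_sub, vadd_eq_add] using this
  set f : ℝ → affineSpan ℝ (coneAt s v s₀) := fun t => ⟨t • (w - u) + w, hmemSpan t⟩ with hf
  have hfc : Continuous f := by
    refine Continuous.subtype_mk ?_ _
    exact (continuous_id.smul continuous_const).add continuous_const
  have hopen : IsOpen (f ⁻¹' interior ((Subtype.val) ⁻¹'
      (coneAt s v s₀) : Set (affineSpan ℝ (coneAt s v s₀)))) :=
    isOpen_interior.preimage hfc
  have h0 : (0:ℝ) ∈ f ⁻¹' interior ((Subtype.val) ⁻¹'
      (coneAt s v s₀) : Set (affineSpan ℝ (coneAt s v s₀))) := by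
    have hf0 : f 0 = y := by
      apply Subtype.ext
      simp [hf, hyw]
    simpa [hf0] using hy
  obtain ⟨ε, hε, hball⟩ := Metric.isOpen_iff.1 hopen 0 h0
  set t : ℝ := ε / 2 with htdef
  have ht0 : 0 < t := by positivity
  have htball : t ∈ Metric.ball (0:ℝ) ε := by
    rw [Metric.mem_ball, Real.dist_eq, sub_zero, abs_of_pos ht0]
    linarith
  have htC : t • (w - u) + w ∈ coneAt s v s₀ := by
    have h' : f t ∈ interior ((Subtype.val) ⁻¹'
        (coneAt s v s₀) : Set (affineSpan ℝ (coneAt s v s₀))) := hball htball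
    have h'' : f t ∈ ((Subtype.val) ⁻¹'
        (coneAt s v s₀) : Set (affineSpan ℝ (coneAt s v s₀))) := interior_subset h'
    exact h''
  obtain ⟨b, hb0, hbs, hbe⟩ := htC
  have h1t : (0:ℝ) < 1 + t := by linarith
  set c : E → ℝ := fun e => (1 + t)⁻¹ * (b e + if s e = s₀ then t else 0) with hc
  refine ⟨c, ?_, ?_, ?_⟩
  · intro e h
    simp [hc, hbs e h, h]
  · intro e h
    have : 0 < b e + t := by have := hb0 e; linarith
    simp only [hc, h, if_true]
    positivity
  · have htu : t • u = ∑ e, (if s e = s₀ then t else 0) • v e := by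
      rw [hu, Finset.smul_sum]
      refine Finset.sum_congr rfl fun e _ => ?_
      by_cases h : s e = s₀ <;> simp [h]
    have key : (1 + t) • w = ∑ e, (b e + if s e = s₀ then t else 0) • v e := by
      have h1 : (1 + t) • w = (t • (w - u) + w) + t • u := by module
      rw [h1, hbe, htu, ← Finset.sum_add_distrib]
      refine Finset.sum_congr rfl fun e _ => ?_
      rw [add_smul]
    have : ∑ e, c e • v e = (1 + t)⁻¹ • ((1 + t) • w) := by
      rw [key, Finset.smul_sum]
      refine Finset.sum_congr rfl fun e _ => ?_
      rw [hc, smul_smul]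
    rw [this, smul_smul, inv_mul_cancel₀ h1t.ne', one_smul]

end Aux

/-- Sufficient direction of the dynamical inclusion criterion: if every source of `G₂` is a
source of `G₁` and for every source `s` of `G₁` the relative interior of `V^{G₂}(s)` is
contained in the relative interior of `V^{G₁}(s)`, then every mass action system generated
by `G₂` is also generated by `G₁`. -/
theorem inclusion_sufficient {d : ℕ} {E₁ E₂ : Type*} [Fintype E₁] [Fintype E₂]
    (s₁ v₁ : E₁ → (Fin d → ℝ)) (s₂ v₂ : E₂ → (Fin d → ℝ))
    (hs₁ : ∀ e i, 0 ≤ s₁ e i) (hs₂ : ∀ e i, 0 ≤ s₂ e i)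
    (hv₁ : ∀ e, v₁ e ≠ 0) (hv₂ : ∀ e, v₂ e ≠ 0)
    (hsrc : ∀ e₂ : E₂, ∃ e₁ : E₁, s₁ e₁ = s₂ e₂)
    (hcone : ∀ e₁ : E₁,
      intrinsicInterior ℝ (coneAt s₂ v₂ (s₁ e₁)) ⊆ intrinsicInterior ℝ (coneAt s₁ v₁ (s₁ e₁))) :
    ∀ k₂ : E₂ → ℝ, (∀ e, 0 < k₂ e) → ∃ k₁ : E₁ → ℝ, (∀ e, 0 < k₁ e) ∧
      ∀ x : Fin d → ℝ, (∀ i, 0 < x i) → massAction s₁ v₁ k₁ x = massAction s₂ v₂ k₂ x := by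
  classical
  intro k₂ hk₂
  -- the aggregated `G₂`-reaction vector at each source
  set w₂ : (Fin d → ℝ) → (Fin d → ℝ) :=
    fun s₀ => ∑ e, (if s₂ e = s₀ then k₂ e else 0) • v₂ e with hw₂
  set S : Finset (Fin d → ℝ) := Finset.image s₁ Finset.univ with hS
  have hP : ∀ s₀ : Fin d → ℝ, ∃ c : E₁ → ℝ, (∀ e, s₁ e ≠ s₀ → c e = 0) ∧
      (∀ e, s₁ e = s₀ → 0 < c e) ∧ (s₀ ∈ S → ∑ e, c e • v₁ e = w₂ s₀) := by
    intro s₀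
    by_cases hmem : s₀ ∈ S
    · obtain ⟨e₁, -, he₁⟩ := Finset.mem_image.1 hmem
      have hA : w₂ s₀ ∈ intrinsicInterior ℝ (coneAt s₂ v₂ s₀) := by
        refine posComb_mem_intrinsicInterior s₂ v₂ s₀ _ ?_ ?_
        · intro e he; simp [he, hk₂ e]
        · intro e he; simp [he]
      have hB : w₂ s₀ ∈ intrinsicInterior ℝ (coneAt s₁ v₁ s₀) := by
        rw [← he₁] at hA ⊢
        exact hcone e₁ hA
      obtain ⟨c, hc1, hc2, hc3⟩ := exists_pos_comb_of_mem_intrinsicInterior s₁ v₁ s₀ hB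
      exact ⟨c, hc1, hc2, fun _ => hc3⟩
    · refine ⟨0, fun _ _ => rfl, ?_, fun h => absurd h hmem⟩
      intro e he
      exact absurd (Finset.mem_image.2 ⟨e, Finset.mem_univ e, he⟩) (he ▸ hmem)
  choose c hc1 hc2 hc3 using hP
  refine ⟨fun e => c (s₁ e) e, fun e => hc2 (s₁ e) e rfl, ?_⟩
  intro x hx
  set X : (Fin d → ℝ) → ℝ := fun s₀ => ∏ i, x i ^ s₀ i with hX
  have h₁ : massAction s₁ v₁ (fun e => c (s₁ e) e) x = ∑ s₀ ∈ S, X s₀ • w₂ s₀ := by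
    rw [massAction, ← Finset.sum_fiberwise_of_maps_to
      (fun e _ => Finset.mem_image_of_mem s₁ (Finset.mem_univ e))
      (fun e => ((c (s₁ e) e * ∏ i, x i ^ s₁ e i) • v₁ e))]
    refine Finset.sum_congr rfl fun s₀ hs₀ => ?_
    have hinner : ∑ e ∈ Finset.univ.filter (fun e => s₁ e = s₀),
        (c (s₁ e) e * ∏ i, x i ^ s₁ e i) • v₁ e
        = X s₀ • ∑ e ∈ Finset.univ.filter (fun e => s₁ e = s₀), c s₀ e • v₁ e := by
      rw [Finset.smul_sum]
      refine Finset.sum_congr rfl fun e he => ?_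
      have hes : s₁ e = s₀ := (Finset.mem_filter.1 he).2
      rw [hes, smul_smul, mul_comm]
    rw [hinner]
    congr 1
    rw [← hc3 s₀ hs₀]
    apply Finset.sum_subset (Finset.filter_subset _ _)
    intro e _ he
    have : s₁ e ≠ s₀ := by
      intro h
      exact he (Finset.mem_filter.2 ⟨Finset.mem_univ e, h⟩)
    rw [hc1 s₀ e this, zero_smul]
  have h₂ : massAction s₂ v₂ k₂ x = ∑ s₀ ∈ S, X s₀ • w₂ s₀ := by
    have hmap : ∀ e ∈ (Finset.univ : Finset E₂), s₂ e ∈ S := by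
      intro e _
      obtain ⟨e₁, he₁⟩ := hsrc e
      exact Finset.mem_image.2 ⟨e₁, Finset.mem_univ e₁, he₁⟩
    rw [massAction, ← Finset.sum_fiberwise_of_maps_to hmap
      (fun e => ((k₂ e * ∏ i, x i ^ s₂ e i) • v₂ e))]
    refine Finset.sum_congr rfl fun s₀ hs₀ => ?_
    · 
      have hinner : ∑ e ∈ Finset.univ.filter (fun e => s₂ e = s₀),
          (k₂ e * ∏ i, x i ^ s₂ e i) • v₂ e
          = X s₀ • ∑ e ∈ Finset.univ.filter (fun e => s₂ e = s₀), k₂ e • v₂ e := by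
        rw [Finset.smul_sum]
        refine Finset.sum_congr rfl fun e he => ?_
        have hes : s₂ e = s₀ := (Finset.mem_filter.1 he).2
        rw [hes, smul_smul, mul_comm]
      rw [hinner]
      congr 1
      rw [hw₂]
      rw [Finset.sum_filter]
      refine Finset.sum_congr rfl fun e _ => ?_
      by_cases h : s₂ e = s₀ <;> simp [h]
  rw [h₁, h₂]
end

section
/- Necessary direction of the dynamical inclusion criterion (source condition): Let G_1 and G_2 be reaction networks in R^d with pairwise distinct source monomials, and suppose that for every assignment of positive rate constants to G_2 there is an assignment of positive rate constants to G_1 producing the same mass action vector field. Then every source vector s of G_2 for which the zero vector is not in the relative interior of the cone V^{G_2}(s) must be a source vector of G_1. -/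
noncomputable def chi {d : ℕ} (s : Fin d → ℝ) : (Fin d → {r : ℝ // 0 < r}) →* ℝ where
  toFun x := ∏ i, (x i : ℝ) ^ s i
  map_one' := by simp [Real.one_rpow]
  map_mul' x y := by
    show ∏ i, ((x i : ℝ) * (y i : ℝ)) ^ s i = _
    rw [← Finset.prod_mul_distrib]
    exact Finset.prod_congr rfl fun i _ => Real.mul_rpow (x i).2.le (y i).2.le

lemma chi_apply {d : ℕ} (s : Fin d → ℝ) (x : Fin d → {r : ℝ // 0 < r}) :
    chi s x = ∏ i, (x i : ℝ) ^ s i := rfl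

lemma chi_injective {d : ℕ} : Function.Injective (chi (d := d)) := by
  intro s s' h
  funext i
  have hx := congrFun (congrArg DFunLike.coe h)
    (fun j => ⟨if j = i then Real.exp 1 else 1, by split <;> positivity⟩)
  simp only [chi, MonoidHom.coe_mk, OneHom.coe_mk] at hx
  rw [Finset.prod_eq_single i (fun j _ hj => by simp [hj]) (by simp),
      Finset.prod_eq_single i (fun j _ hj => by simp [hj]) (by simp)] at hx
  simp only [if_pos rfl, if_true, Real.exp_one_rpow, Real.exp_eq_exp] at hx
  exact hx


/-- Necessary direction of the dynamical inclusion criterion (source condition): if every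
mass action system generated by `G₂` is also generated by `G₁`, then every source `s` of
`G₂` with `0 ∉ RelInt(V^{G₂}(s))` is a source of `G₁`. -/
theorem inclusion_necessary_sources {d : ℕ} {E₁ E₂ : Type*} [Fintype E₁] [Fintype E₂]
    (s₁ v₁ : E₁ → (Fin d → ℝ)) (s₂ v₂ : E₂ → (Fin d → ℝ))
    (hs₁ : ∀ e i, 0 ≤ s₁ e i) (hs₂ : ∀ e i, 0 ≤ s₂ e i)
    (hv₁ : ∀ e, v₁ e ≠ 0) (hv₂ : ∀ e, v₂ e ≠ 0)
    (hincl : ∀ k₂ : E₂ → ℝ, (∀ e, 0 < k₂ e) → ∃ k₁ : E₁ → ℝ, (∀ e, 0 < k₁ e) ∧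
      ∀ x : Fin d → ℝ, (∀ i, 0 < x i) → massAction s₁ v₁ k₁ x = massAction s₂ v₂ k₂ x) :
    ∀ e₂ : E₂, (0 : Fin d → ℝ) ∉ intrinsicInterior ℝ (coneAt s₂ v₂ (s₂ e₂)) →
      ∃ e₁ : E₁, s₁ e₁ = s₂ e₂ := by
  classical
  intro e₂ h0
  by_contra hne
  push_neg at hne
  apply h0; clear h0
  obtain ⟨k₁, hk₁pos, hk₁⟩ := hincl (fun _ => 1) (fun _ => one_pos)
  set C : Set (Fin d → ℝ) := coneAt s₂ v₂ (s₂ e₂) with hC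
  set S : Finset E₂ := Finset.univ.filter (fun e => s₂ e = s₂ e₂) with hS
  have hmemC : ∀ c : E₂ → ℝ, (∀ e, 0 ≤ c e) → (∀ e, s₂ e ≠ s₂ e₂ → c e = 0) →
      (∑ e, c e • v₂ e) ∈ C := fun c h1 h2 => ⟨c, h1, h2, rfl⟩
  -- Step 1: key vanishing of the sum of reaction vectors with source s₂ e₂
  have key : ∀ j, ∑ e ∈ S, v₂ e j = 0 := by
    intro j
    set T : Finset (Fin d → ℝ) :=
      Finset.image s₁ Finset.univ ∪ Finset.image s₂ Finset.univ with hT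
    set g : (Fin d → ℝ) → ℝ := fun s =>
      (∑ e ∈ Finset.univ.filter (fun e => s₁ e = s), k₁ e * v₁ e j)
      - ∑ e ∈ Finset.univ.filter (fun e => s₂ e = s), v₂ e j with hg
    have hmemT₁ : ∀ e : E₁, s₁ e ∈ T := fun e => by
      rw [hT]; exact Finset.mem_union_left _ (Finset.mem_image_of_mem s₁ (Finset.mem_univ e))
    have hmemT₂ : ∀ e : E₂, s₂ e ∈ T := fun e => by
      rw [hT]; exact Finset.mem_union_right _ (Finset.mem_image_of_mem s₂ (Finset.mem_univ e))
    have hLI := (linearIndependent_monoidHom (Fin d → {r : ℝ // 0 < r}) ℝ).comp chi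
      chi_injective
    have hsum : ∑ s ∈ T, g s • (⇑(chi s) : (Fin d → {r : ℝ // 0 < r}) → ℝ) = 0 := by
      funext x
      have hxpos : ∀ i, (0:ℝ) < (x i : ℝ) := fun i => (x i).2
      have hma := congrFun (hk₁ (fun i => (x i : ℝ)) hxpos) j
      simp only [massAction, Finset.sum_apply, Pi.smul_apply, smul_eq_mul, one_mul] at hma
      have hA : ∑ s ∈ T, (∑ e ∈ Finset.univ.filter (fun e => s₁ e = s), k₁ e * v₁ e j)
          * chi s x = ∑ e, (k₁ e * ∏ i, (x i : ℝ) ^ s₁ e i) * v₁ e j := by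
        rw [← Finset.sum_fiberwise_of_maps_to (g := s₁) (fun e _ => hmemT₁ e) (fun e => (k₁ e * ∏ i, (x i : ℝ) ^ s₁ e i) * v₁ e j)]
        refine Finset.sum_congr rfl fun s _ => ?_
        rw [Finset.sum_mul]
        refine Finset.sum_congr rfl fun e he => ?_
        have hes : s₁ e = s := (Finset.mem_filter.mp he).2
        rw [← hes, chi_apply]
        ring
      have hB : ∑ s ∈ T, (∑ e ∈ Finset.univ.filter (fun e => s₂ e = s), v₂ e j)
          * chi s x = ∑ e, (∏ i, (x i : ℝ) ^ s₂ e i) * v₂ e j := by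
        rw [← Finset.sum_fiberwise_of_maps_to (g := s₂) (fun e _ => hmemT₂ e) (fun e => (∏ i, (x i : ℝ) ^ s₂ e i) * v₂ e j)]
        refine Finset.sum_congr rfl fun s _ => ?_
        rw [Finset.sum_mul]
        refine Finset.sum_congr rfl fun e he => ?_
        have hes : s₂ e = s := (Finset.mem_filter.mp he).2
        rw [← hes, chi_apply]
        ring
      simp only [Finset.sum_apply, Pi.smul_apply, smul_eq_mul, Pi.zero_apply, hg,
        sub_mul, Finset.sum_sub_distrib, hA, hB]
      rw [sub_eq_zero, hma]
    have hge := linearIndependent_iff'.mp hLI T g hsum (s₂ e₂) (hmemT₂ e₂)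
    have hempty : Finset.univ.filter (fun e => s₁ e = s₂ e₂) = (∅ : Finset E₁) :=
      Finset.filter_false_of_mem fun e _ => hne e
    rw [hg] at hge
    simp only [hempty, Finset.sum_empty, zero_sub, neg_eq_zero] at hge
    exact hge
  have hzero : ∑ e ∈ S, v₂ e = 0 := by
    funext j
    rw [Finset.sum_apply]
    exact key j
  -- Step 2: C is a linear subspace
  have hadd : ∀ x y, x ∈ C → y ∈ C → x + y ∈ C := by
    rintro x y ⟨c, hc0, hcs, rfl⟩ ⟨c', hc0', hcs', rfl⟩
    have h5 := hmemC (fun e => c e + c' e) (fun e => add_nonneg (hc0 e) (hc0' e))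
      (fun e he => by show c e + c' e = 0; rw [hcs e he, hcs' e he, add_zero])
    have h4 : (∑ e, c e • v₂ e) + ∑ e, c' e • v₂ e
        = ∑ e, (fun e => c e + c' e) e • v₂ e := by
      rw [← Finset.sum_add_distrib]
      exact Finset.sum_congr rfl fun e _ => (add_smul (c e) (c' e) (v₂ e)).symm
    rw [h4]; exact h5
  have hnns : ∀ (r : ℝ) x, 0 ≤ r → x ∈ C → r • x ∈ C := by
    rintro r x hr ⟨c, hc0, hcs, rfl⟩
    have h5 := hmemC (fun e => r * c e) (fun e => mul_nonneg hr (hc0 e))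
      (fun e he => by show r * c e = 0; rw [hcs e he, mul_zero])
    have h4 : r • ∑ e, c e • v₂ e = ∑ e, (fun e => r * c e) e • v₂ e := by
      rw [Finset.smul_sum]
      exact Finset.sum_congr rfl fun e _ => smul_smul r (c e) (v₂ e)
    rw [h4]; exact h5
  have hneg : ∀ x, x ∈ C → -x ∈ C := by
    rintro x ⟨c, hc0, hcs, rfl⟩
    set t : ℝ := ∑ e, c e with ht
    have hct : ∀ e, c e ≤ t :=
      fun e => Finset.single_le_sum (fun e _ => hc0 e) (Finset.mem_univ e)
    have := hmemC (fun e => if s₂ e = s₂ e₂ then t - c e else 0)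
      (fun e => by split
                   · exact sub_nonneg.mpr (hct e)
                   · exact le_refl 0)
      (fun e he => by simp [he])
    have hsum2 : ∑ e, (fun e => if s₂ e = s₂ e₂ then t - c e else 0) e • v₂ e
        = -(∑ e, c e • v₂ e) := by
      show ∑ e, (if s₂ e = s₂ e₂ then t - c e else 0) • v₂ e = _
      have h1 : ∀ e : E₂, (if s₂ e = s₂ e₂ then t - c e else 0) • v₂ e
          = (if s₂ e = s₂ e₂ then t • v₂ e else 0) - c e • v₂ e := by
        intro e
        by_cases h : s₂ e = s₂ e₂
        · simp [h, sub_smul]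
        · simp [h, hcs e h]
      rw [Finset.sum_congr rfl fun e _ => h1 e, Finset.sum_sub_distrib,
        ← Finset.sum_filter, ← hS, ← Finset.smul_sum, hzero, smul_zero, zero_sub]
    rw [← hsum2]; exact this
  have hC0 : (0 : Fin d → ℝ) ∈ C :=
    ⟨0, fun e => le_refl 0, fun e _ => rfl, by simp⟩
  let p : Submodule ℝ (Fin d → ℝ) :=
    { carrier := C
      zero_mem' := hC0
      add_mem' := fun hx hy => hadd _ _ hx hy
      smul_mem' := fun r x hx => by
        rcases le_or_gt 0 r with h | h
        · exact hnns r x h hx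
        · have h2 := hneg _ (hnns (-r) x (by linarith) hx)
          rwa [neg_smul, neg_neg] at h2 }
  -- Step 3: intrinsic interior of a subspace is itself
  have hspan : affineSpan ℝ C = p.toAffineSubspace := by
    have h3 : C = (p.toAffineSubspace : Set (Fin d → ℝ)) := rfl
    rw [h3, AffineSubspace.affineSpan_coe]
  rw [mem_intrinsicInterior]
  refine ⟨⟨0, subset_affineSpan ℝ C hC0⟩, ?_, rfl⟩
  have hpre : ((↑) ⁻¹' C : Set (affineSpan ℝ C)) = Set.univ := by
    ext y
    simp only [Set.mem_preimage, Set.mem_univ, iff_true]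
    have hy2 : (↑y : Fin d → ℝ) ∈ p.toAffineSubspace := by
      rw [← hspan]; exact y.2
    exact Submodule.mem_toAffineSubspace.mp hy2
  rw [hpre, interior_univ]
  exact Set.mem_univ _
end

section
/- Capacity for dynamical equivalence criterion: two reaction networks G_1 and G_2 in R^d have the capacity for dynamical equivalence (i.e., there exist positive rate constants K_1 for G_1 and K_2 for G_2 with f_{G_1(K_1)} = f_{G_2(K_2)}) if and only if for every s in the union of the source sets of G_1 and G_2, the relative interiors of the cones V^{G_1}(s) and V^{G_2}(s) intersect, where V^G(s) = {0} if s is not a source of G. -/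
open Set Finset


section Cone

variable {d : ℕ} {F : Type*} [Fintype F]

/-- Cone generated by a finite family. -/
def stdCone (w : F → (Fin d → ℝ)) : Set (Fin d → ℝ) :=
  {x | ∃ c : F → ℝ, (∀ e, 0 ≤ c e) ∧ x = ∑ e, c e • w e}

/-- The linear map sending coefficients to the combination. -/
noncomputable def coneMap (w : F → (Fin d → ℝ)) : (F → ℝ) →ₗ[ℝ] (Fin d → ℝ) where
  toFun c := ∑ e, c e • w e
  map_add' a b := by simp [add_smul, Finset.sum_add_distrib]
  map_smul' r a := by simp [mul_smul, Finset.smul_sum]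

lemma zero_mem_stdCone (w : F → (Fin d → ℝ)) : (0 : Fin d → ℝ) ∈ stdCone w :=
  ⟨0, fun _ => le_refl _, by simp⟩

lemma coneMap_mem_range_span (w : F → (Fin d → ℝ)) :
    Submodule.span ℝ (stdCone w) = LinearMap.range (coneMap w) := by
  apply le_antisymm
  · rw [Submodule.span_le]
    rintro x ⟨c, _, rfl⟩
    exact ⟨c, rfl⟩
  · rintro x ⟨c, rfl⟩
    have : coneMap w c = ∑ e, c e • w e := rfl
    rw [this]
    refine Submodule.sum_mem _ fun e _ => Submodule.smul_mem _ _ (Submodule.subset_span ?_)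
    classical
    refine ⟨Pi.single e 1, fun e' => ?_, ?_⟩
    · by_cases h : e' = e <;> simp [Pi.single_apply, h]
    · rw [Finset.sum_eq_single e (fun e' _ he' => by simp [Pi.single_apply, he'])
        (by simp)]
      simp

lemma affineSpan_stdCone (w : F → (Fin d → ℝ)) :
    (affineSpan ℝ (stdCone w) : Set (Fin d → ℝ)) = (LinearMap.range (coneMap w) : Set (Fin d → ℝ)) := by
  rw [← coneMap_mem_range_span, ← affineSpan_insert_zero, Set.insert_eq_of_mem (zero_mem_stdCone w)]

end Cone

section IntrinsicChar

variable {d : ℕ}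

lemma mem_intrinsicInterior_iff' {C : Set (Fin d → ℝ)} {x : Fin d → ℝ} :
    x ∈ intrinsicInterior ℝ C ↔
      x ∈ C ∧ ∃ U : Set (Fin d → ℝ), IsOpen U ∧ x ∈ U ∧
        U ∩ (affineSpan ℝ C : Set (Fin d → ℝ)) ⊆ C := by
  constructor
  · intro h
    have hxC : x ∈ C := intrinsicInterior_subset h
    obtain ⟨y, hy, rfl⟩ := mem_intrinsicInterior.1 h
    obtain ⟨U', hU'sub, hU'open, hyU'⟩ := mem_interior.1 hy
    obtain ⟨U, hUopen, hpre⟩ := isOpen_induced_iff.1 hU'open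
    refine ⟨hxC, U, hUopen, ?_, ?_⟩
    · have : y ∈ ((↑) ⁻¹' U : Set (affineSpan ℝ C)) := by rw [hpre]; exact hyU'
      exact this
    · rintro z ⟨hzU, hzspan⟩
      have hz : (⟨z, hzspan⟩ : affineSpan ℝ C) ∈ U' := by
        rw [← hpre]; exact hzU
      exact hU'sub hz
  · rintro ⟨hxC, U, hU, hxU, hsub⟩
    rw [mem_intrinsicInterior]
    refine ⟨⟨x, subset_affineSpan ℝ C hxC⟩, ?_, rfl⟩
    refine mem_interior.2 ⟨(↑) ⁻¹' U, ?_, continuous_subtype_val.isOpen_preimage U hU, by exact hxU⟩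
    intro z hz
    exact hsub ⟨hz, z.2⟩

end IntrinsicChar

section ConeInterior

variable {d : ℕ} {F : Type*} [Fintype F]

lemma sum_pos_mem_intrinsicInterior (w : F → (Fin d → ℝ)) {k : F → ℝ} (hk : ∀ e, 0 < k e) :
    (∑ e, k e • w e) ∈ intrinsicInterior ℝ (stdCone w) := by
  set V := LinearMap.range (coneMap w) with hV
  let Tr : (F → ℝ) →L[ℝ] V := LinearMap.toContinuousLinearMap ((coneMap w).rangeRestrict)
  have hsurj : Function.Surjective Tr := LinearMap.surjective_rangeRestrict _
  have hopen : IsOpenMap Tr := ContinuousLinearMap.isOpenMap Tr hsurj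
  have hP : IsOpen {c : F → ℝ | ∀ e, 0 < c e} := by
    have : {c : F → ℝ | ∀ e, 0 < c e} = ⋂ e, {c : F → ℝ | 0 < c e} := by
      ext c; simp
    rw [this]
    exact isOpen_iInter_of_finite fun e => isOpen_Ioi.preimage (continuous_apply e)
  obtain ⟨U, hUopen, hpre⟩ := isOpen_induced_iff.1 (hopen _ hP)
  rw [mem_intrinsicInterior_iff']
  have hTr : ∀ c : F → ℝ, (Tr c : Fin d → ℝ) = ∑ e, c e • w e := fun c => rfl
  refine ⟨⟨k, fun e => (hk e).le, rfl⟩, U, hUopen, ?_, ?_⟩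
  · have : Tr k ∈ Subtype.val ⁻¹' U := by rw [hpre]; exact ⟨k, hk, rfl⟩
    have h2 : (Tr k : Fin d → ℝ) ∈ U := this
    rwa [hTr] at h2
  · rintro z ⟨hzU, hzspan⟩
    rw [affineSpan_stdCone] at hzspan
    have : (⟨z, hzspan⟩ : V) ∈ Subtype.val ⁻¹' U := hzU
    rw [hpre] at this
    obtain ⟨c, hc, hcz⟩ := this
    refine ⟨c, fun e => (hc e).le, ?_⟩
    have := congrArg (Subtype.val) hcz
    rw [hTr] at this
    exact this.symm

lemma exists_pos_of_mem_intrinsicInterior (w : F → (Fin d → ℝ)) {x : Fin d → ℝ}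
    (hx : x ∈ intrinsicInterior ℝ (stdCone w)) :
    ∃ c : F → ℝ, (∀ e, 0 < c e) ∧ x = ∑ e, c e • w e := by
  obtain ⟨hxC, U, hU, hxU, hsub⟩ := mem_intrinsicInterior_iff'.1 hx
  obtain ⟨b, hb, hxb⟩ := hxC
  set u : Fin d → ℝ := ∑ e, (1 : ℝ) • w e with hu
  have hcont : ContinuousAt (fun ε : ℝ => x - ε • u) 0 := by fun_prop
  have h0 : (fun ε : ℝ => x - ε • u) 0 = x := by simp
  have hev : {ε : ℝ | x - ε • u ∈ U} ∈ nhds (0 : ℝ) := by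
    have := hcont (by rw [h0]; exact hU.mem_nhds hxU)
    exact this
  obtain ⟨δ, hδpos, hδ⟩ := Metric.mem_nhds_iff.1 hev
  have hε : x - (δ/2) • u ∈ U := by
    apply hδ
    simp [Real.dist_eq, abs_of_pos, hδpos, half_lt_self hδpos, abs_of_nonneg (le_of_lt (half_pos hδpos))]
  have hmem : x - (δ/2) • u ∈ (affineSpan ℝ (stdCone w) : Set (Fin d → ℝ)) := by
    rw [affineSpan_stdCone]
    have h1 : x ∈ LinearMap.range (coneMap w) := ⟨b, hxb.symm⟩
    have h2 : u ∈ LinearMap.range (coneMap w) := ⟨fun _ => 1, rfl⟩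
    exact Submodule.sub_mem _ h1 (Submodule.smul_mem _ _ h2)
  obtain ⟨b', hb', hxb'⟩ := hsub ⟨hε, hmem⟩
  refine ⟨fun e => b' e + δ/2, fun e => add_pos_of_nonneg_of_pos (hb' e) (half_pos hδpos), ?_⟩
  have : ∑ e, (b' e + δ/2) • w e = (∑ e, b' e • w e) + (δ/2) • u := by
    rw [hu, Finset.smul_sum, ← Finset.sum_add_distrib]
    exact Finset.sum_congr rfl fun e _ => by rw [add_smul]; simp [smul_smul]
  rw [this, ← hxb']
  abel

end ConeInterior

section ConeAt

variable {d : ℕ} {E : Type*} [Fintype E]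

open Classical in
lemma sum_subtype_fiber (s : E → (Fin d → ℝ)) (s₀ : Fin d → ℝ) (f : E → (Fin d → ℝ)) :
    ∑ e : {e : E // s e = s₀}, f e = ∑ e ∈ Finset.univ.filter (fun e => s e = s₀), f e :=
  (Finset.sum_subtype _ (fun e => by simp) f).symm

open Classical in
lemma coneAt_eq (s v : E → (Fin d → ℝ)) (s₀ : Fin d → ℝ) :
    coneAt s v s₀ = stdCone (fun e : {e : E // s e = s₀} => v e) := by
  ext x
  constructor
  · rintro ⟨c, h0, hz, rfl⟩
    refine ⟨fun e => c e, fun e => h0 e, ?_⟩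
    rw [sum_subtype_fiber s s₀ (fun e => c e • v e),
      Finset.sum_filter_of_ne (fun e _ hne => by
        by_contra hns
        rw [hz e hns, zero_smul] at hne
        exact hne rfl)]
  · rintro ⟨c, h0, rfl⟩
    refine ⟨fun e => if h : s e = s₀ then c ⟨e, h⟩ else 0, fun e => ?_, fun e he => by simp [he], ?_⟩
    · by_cases h : s e = s₀ <;> simp [h]
      exact h0 _
    · symm
      rw [← Finset.sum_filter_of_ne (p := fun e => s e = s₀) (fun e _ hne => by
            by_contra hns; simp [hns] at hne),
        ← sum_subtype_fiber s s₀]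
      refine Finset.sum_congr rfl fun e _ => ?_
      simp only []
      rw [dif_pos e.2]

end ConeAt

section Characters

variable {d : ℕ}

/-- The multiplicative character `y ↦ exp(⟨t, y⟩)`. -/
noncomputable def expChar (t : Fin d → ℝ) : Multiplicative (Fin d → ℝ) →* ℝ where
  toFun y := Real.exp (∑ i, t i * Multiplicative.toAdd y i)
  map_one' := by simp
  map_mul' a b := by
    simp only [toAdd_mul, Pi.add_apply, mul_add, Finset.sum_add_distrib,
      Real.exp_add]

lemma expChar_injective : Function.Injective (expChar (d := d)) := by
  intro a b h
  funext i
  have h1 := congrArg (fun f => f (Multiplicative.ofAdd (Pi.single i (1 : ℝ)))) h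
  simp only [expChar, MonoidHom.coe_mk, OneHom.coe_mk, toAdd_ofAdd] at h1
  rw [Real.exp_eq_exp] at h1
  simpa [Pi.single_apply, mul_ite, Finset.sum_ite_eq'] using h1

lemma sum_exp_eq_zero {S : Finset (Fin d → ℝ)} {α : (Fin d → ℝ) → ℝ}
    (h : ∀ y : Fin d → ℝ, ∑ t ∈ S, α t * Real.exp (∑ i, t i * y i) = 0) :
    ∀ t ∈ S, α t = 0 := by
  have li : LinearIndependent ℝ
      (fun t : S => ((expChar (t : Fin d → ℝ)) : Multiplicative (Fin d → ℝ) → ℝ)) :=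
    (linearIndependent_monoidHom (Multiplicative (Fin d → ℝ)) ℝ).comp
      (fun t : S => expChar (t : Fin d → ℝ))
      (expChar_injective.comp Subtype.val_injective)
  have hsum : ∑ t : S, α (t : Fin d → ℝ) •
      ((expChar (t : Fin d → ℝ)) : Multiplicative (Fin d → ℝ) → ℝ) = 0 := by
    funext y
    have := h (Multiplicative.toAdd y)
    rw [← Finset.sum_coe_sort S (fun t => α t * Real.exp (∑ i, t i * Multiplicative.toAdd y i))]
      at this
    simpa [expChar] using this
  intro t ht
  exact Fintype.linearIndependent_iff.1 li (fun t => α (t : Fin d → ℝ)) hsum ⟨t, ht⟩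

end Characters

open Classical in
lemma massAction_group {d : ℕ} {E : Type*} [Fintype E] (s v : E → (Fin d → ℝ)) (k : E → ℝ)
    (S : Finset (Fin d → ℝ)) (hS : ∀ e : E, s e ∈ S) (x : Fin d → ℝ) :
    massAction s v k x = ∑ t ∈ S, (∏ i, x i ^ t i) •
      ∑ e ∈ Finset.univ.filter (fun e => s e = t), k e • v e := by
  unfold massAction
  rw [← Finset.sum_fiberwise_of_maps_to (g := s) (fun e _ => hS e)
    (fun e => (k e * ∏ i, x i ^ s e i) • v e)]
  refine Finset.sum_congr rfl fun t _ => ?_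
  rw [Finset.smul_sum]
  refine Finset.sum_congr rfl fun e he => ?_
  have hst : s e = t := (Finset.mem_filter.1 he).2
  subst hst
  rw [smul_smul, mul_comm]

lemma prod_exp_rpow {d : ℕ} (y t : Fin d → ℝ) :
    ∏ i, Real.exp (y i) ^ t i = Real.exp (∑ i, t i * y i) := by
  rw [Real.exp_sum]
  refine Finset.prod_congr rfl fun i _ => ?_
  rw [Real.rpow_def_of_pos (Real.exp_pos _), Real.log_exp, mul_comm]

/-- Capacity for dynamical equivalence criterion: `G₁` and `G₂` have the capacity for
dynamical equivalence iff for every `s` in the union of their source sets, the relative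
interiors of `V^{G₁}(s)` and `V^{G₂}(s)` intersect. -/
theorem capacity_iff {d : ℕ} {E₁ E₂ : Type*} [Fintype E₁] [Fintype E₂]
    (s₁ v₁ : E₁ → (Fin d → ℝ)) (s₂ v₂ : E₂ → (Fin d → ℝ))
    (hs₁ : ∀ e i, 0 ≤ s₁ e i) (hs₂ : ∀ e i, 0 ≤ s₂ e i)
    (hv₁ : ∀ e, v₁ e ≠ 0) (hv₂ : ∀ e, v₂ e ≠ 0) :
    (∃ (k₁ : E₁ → ℝ) (k₂ : E₂ → ℝ), (∀ e, 0 < k₁ e) ∧ (∀ e, 0 < k₂ e) ∧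
      ∀ x : Fin d → ℝ, (∀ i, 0 < x i) → massAction s₁ v₁ k₁ x = massAction s₂ v₂ k₂ x) ↔
    (∀ s₀ : Fin d → ℝ, ((∃ e₁, s₁ e₁ = s₀) ∨ (∃ e₂, s₂ e₂ = s₀)) →
      (intrinsicInterior ℝ (coneAt s₁ v₁ s₀) ∩ intrinsicInterior ℝ (coneAt s₂ v₂ s₀)).Nonempty) := by
  classical
  set S : Finset (Fin d → ℝ) := Finset.image s₁ Finset.univ ∪ Finset.image s₂ Finset.univ with hSdef
  have hS₁ : ∀ e, s₁ e ∈ S := fun e =>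
    Finset.mem_union_left _ (Finset.mem_image_of_mem _ (Finset.mem_univ e))
  have hS₂ : ∀ e, s₂ e ∈ S := fun e =>
    Finset.mem_union_right _ (Finset.mem_image_of_mem _ (Finset.mem_univ e))
  constructor
  · rintro ⟨k₁, k₂, hk₁, hk₂, heq⟩ s₀ hs₀
    have hs₀S : s₀ ∈ S := by
      rcases hs₀ with ⟨e, rfl⟩ | ⟨e, rfl⟩
      exacts [hS₁ e, hS₂ e]
    have key : ∀ t ∈ S,
        (∑ e ∈ Finset.univ.filter (fun e => s₁ e = t), k₁ e • v₁ e)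
          = ∑ e ∈ Finset.univ.filter (fun e => s₂ e = t), k₂ e • v₂ e := by
      intro t ht
      funext j
      have hz := sum_exp_eq_zero (S := S)
        (α := fun t => (∑ e ∈ Finset.univ.filter (fun e => s₁ e = t), k₁ e * v₁ e j)
          - ∑ e ∈ Finset.univ.filter (fun e => s₂ e = t), k₂ e * v₂ e j) ?_ t ht
      · have h4 := sub_eq_zero.1 hz
        simpa [Finset.sum_apply, Pi.smul_apply, smul_eq_mul] using h4
      · intro y
        have h1 := heq (fun i => Real.exp (y i)) (fun i => Real.exp_pos _)
        rw [massAction_group s₁ v₁ k₁ S hS₁, massAction_group s₂ v₂ k₂ S hS₂] at h1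
        have h2 := congrArg (fun f => f j) h1
        simp only [Finset.sum_apply, Pi.smul_apply, smul_eq_mul, prod_exp_rpow] at h2
        simp only [sub_mul]
        rw [Finset.sum_sub_distrib, sub_eq_zero]
        have conv1 : ∀ (A : (Fin d → ℝ) → ℝ), ∑ t ∈ S, A t * Real.exp (∑ i, t i * y i)
            = ∑ t ∈ S, Real.exp (∑ i, t i * y i) * A t :=
          fun A => Finset.sum_congr rfl fun t _ => mul_comm _ _
        rw [conv1, conv1]
        exact h2
    refine ⟨∑ e ∈ Finset.univ.filter (fun e => s₁ e = s₀), k₁ e • v₁ e, ?_, ?_⟩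
    · rw [coneAt_eq, ← sum_subtype_fiber s₁ s₀ (fun e => k₁ e • v₁ e)]
      exact sum_pos_mem_intrinsicInterior _ (fun e => hk₁ e)
    · rw [key s₀ hs₀S, coneAt_eq, ← sum_subtype_fiber s₂ s₀ (fun e => k₂ e • v₂ e)]
      exact sum_pos_mem_intrinsicInterior _ (fun e => hk₂ e)
  · intro hyp
    set cond : (Fin d → ℝ) → Prop := fun s₀ => (∃ e₁, s₁ e₁ = s₀) ∨ (∃ e₂, s₂ e₂ = s₀) with hcond
    set W : (Fin d → ℝ) → (Fin d → ℝ) := fun s₀ =>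
      if h : cond s₀ then (hyp s₀ h).choose else 0 with hWdef
    have hW1 : ∀ s₀, cond s₀ → W s₀ ∈ intrinsicInterior ℝ (coneAt s₁ v₁ s₀) := by
      intro s₀ h
      rw [hWdef]; simp only [dif_pos h]
      exact (hyp s₀ h).choose_spec.1
    have hW2 : ∀ s₀, cond s₀ → W s₀ ∈ intrinsicInterior ℝ (coneAt s₂ v₂ s₀) := by
      intro s₀ h
      rw [hWdef]; simp only [dif_pos h]
      exact (hyp s₀ h).choose_spec.2
    have hc₁ : ∀ s₀ : Fin d → ℝ, ∃ c : E₁ → ℝ, (∀ e, s₁ e = s₀ → 0 < c e) ∧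
        (∀ e, s₁ e ≠ s₀ → c e = 0) ∧ W s₀ = ∑ e, c e • v₁ e := by
      intro s₀
      by_cases h : cond s₀
      · have hm := hW1 s₀ h
        rw [coneAt_eq] at hm
        obtain ⟨c, hcpos, hsum⟩ := exists_pos_of_mem_intrinsicInterior _ hm
        refine ⟨fun e => if he : s₁ e = s₀ then c ⟨e, he⟩ else 0,
          fun e he => by simp only [dif_pos he]; exact hcpos _,
          fun e he => by simp [he], ?_⟩
        rw [hsum]
        symm
        rw [← Finset.sum_filter_of_ne (p := fun e => s₁ e = s₀) (fun e _ hne => by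
              by_contra hns; simp [hns] at hne),
          ← sum_subtype_fiber s₁ s₀]
        refine Finset.sum_congr rfl fun e _ => ?_
        simp only []
        rw [dif_pos e.2]
      · refine ⟨0, fun e he => absurd (Or.inl ⟨e, he⟩) h, fun _ _ => rfl, ?_⟩
        rw [hWdef]; simp [dif_neg h]
    have hc₂ : ∀ s₀ : Fin d → ℝ, ∃ c : E₂ → ℝ, (∀ e, s₂ e = s₀ → 0 < c e) ∧
        (∀ e, s₂ e ≠ s₀ → c e = 0) ∧ W s₀ = ∑ e, c e • v₂ e := by
      intro s₀
      by_cases h : cond s₀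
      · have hm := hW2 s₀ h
        rw [coneAt_eq] at hm
        obtain ⟨c, hcpos, hsum⟩ := exists_pos_of_mem_intrinsicInterior _ hm
        refine ⟨fun e => if he : s₂ e = s₀ then c ⟨e, he⟩ else 0,
          fun e he => by simp only [dif_pos he]; exact hcpos _,
          fun e he => by simp [he], ?_⟩
        rw [hsum]
        symm
        rw [← Finset.sum_filter_of_ne (p := fun e => s₂ e = s₀) (fun e _ hne => by
              by_contra hns; simp [hns] at hne),
          ← sum_subtype_fiber s₂ s₀]
        refine Finset.sum_congr rfl fun e _ => ?_
        simp only []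
        rw [dif_pos e.2]
      · refine ⟨0, fun e he => absurd (Or.inr ⟨e, he⟩) h, fun _ _ => rfl, ?_⟩
        rw [hWdef]; simp [dif_neg h]
    choose c₁ h1pos h1zero h1sum using hc₁
    choose c₂ h2pos h2zero h2sum using hc₂
    refine ⟨fun e => c₁ (s₁ e) e, fun e => c₂ (s₂ e) e,
      fun e => h1pos (s₁ e) e rfl, fun e => h2pos (s₂ e) e rfl, ?_⟩
    intro x hx
    rw [massAction_group s₁ v₁ _ S hS₁ x, massAction_group s₂ v₂ _ S hS₂ x]
    refine Finset.sum_congr rfl fun t _ => ?_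
    congr 1
    have e₁ : ∑ e ∈ Finset.univ.filter (fun e => s₁ e = t), c₁ (s₁ e) e • v₁ e
        = ∑ e, c₁ t e • v₁ e := by
      rw [Finset.sum_congr rfl (fun e he => by
        rw [(Finset.mem_filter.1 he).2])]
      exact Finset.sum_filter_of_ne fun e _ hne => by
        by_contra hns
        rw [h1zero t e hns, zero_smul] at hne
        exact hne rfl
    have e₂ : ∑ e ∈ Finset.univ.filter (fun e => s₂ e = t), c₂ (s₂ e) e • v₂ e
        = ∑ e, c₂ t e • v₂ e := by
      rw [Finset.sum_congr rfl (fun e he => by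
        rw [(Finset.mem_filter.1 he).2])]
      exact Finset.sum_filter_of_ne fun e _ hne => by
        by_contra hns
        rw [h2zero t e hns, zero_smul] at hne
        exact hne rfl
    rw [e₁, e₂, ← h1sum, ← h2sum]
end

section
/- Endotactic networks are effectively source-only: for every endotactic reaction network G in R^d, there exists a reaction network G~ whose node set equals the set of source vectors of G, whose every target is also a source (source-only), and which includes the dynamics of G, i.e., every source of G is a source of G~ and for every source s, RelInt(V^G(s)) ⊆ RelInt(V^{G~}(s)). -/
open Finset

section IconeBasics
variable {V : Type*} [NormedAddCommGroup V] [NormedSpace ℝ V]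
variable {ι : Type*} [Fintype ι]

def icone (g : ι → V) : Set V := {x | ∃ c : ι → ℝ, (∀ i, 0 ≤ c i) ∧ x = ∑ i, c i • g i}

theorem zero_mem_icone (g : ι → V) : (0 : V) ∈ icone g :=
  ⟨0, fun _ => le_rfl, by simp⟩

theorem mem_icone_self (g : ι → V) (i : ι) : g i ∈ icone g := by
  classical
  refine ⟨fun j => if j = i then 1 else 0, fun j => by positivity, ?_⟩
  simp [ite_smul]

theorem icone_add {g : ι → V} {x y : V} (hx : x ∈ icone g) (hy : y ∈ icone g) :
    x + y ∈ icone g := by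
  obtain ⟨c, hc, rfl⟩ := hx
  obtain ⟨c', hc', rfl⟩ := hy
  exact ⟨c + c', fun i => add_nonneg (hc i) (hc' i), by simp [add_smul, Finset.sum_add_distrib]⟩

theorem icone_smul {g : ι → V} {x : V} {t : ℝ} (ht : 0 ≤ t) (hx : x ∈ icone g) :
    t • x ∈ icone g := by
  obtain ⟨c, hc, rfl⟩ := hx
  exact ⟨t • c, fun i => mul_nonneg ht (hc i), by simp [Finset.smul_sum, smul_smul]⟩

theorem convex_icone (g : ι → V) : Convex ℝ (icone g) := by
  intro x hx y hy a b ha hb _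
  exact icone_add (icone_smul ha hx) (icone_smul hb hy)

theorem icone_sum {g : ι → V} {κ : Type*} (t : Finset κ) (f : κ → V)
    (hf : ∀ k ∈ t, f k ∈ icone g) : (∑ k ∈ t, f k) ∈ icone g := by
  classical
  induction t using Finset.induction with
  | empty => simpa using zero_mem_icone g
  | insert _ _ hk ih =>
    rename_i a u
    rw [Finset.sum_insert hk]
    exact icone_add (hf a (Finset.mem_insert_self a u))
      (ih fun k hku => hf k (Finset.mem_insert_of_mem hku))

theorem icone_caratheodory {g : ι → V} {x : V} (hx : x ∈ icone g) :
    ∃ c : ι → ℝ, (∀ i, 0 ≤ c i) ∧ x = ∑ i, c i • g i ∧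
      LinearIndependent ℝ (fun i : {i // c i ≠ 0} => g i.1) := by
  classical
  obtain ⟨c₀, hc₀, hxc₀⟩ := hx
  have key : ∀ n (c : ι → ℝ), (Finset.univ.filter fun i => c i ≠ 0).card = n →
      (∀ i, 0 ≤ c i) → ∃ c' : ι → ℝ, (∀ i, 0 ≤ c' i) ∧
      (∑ i, c' i • g i) = (∑ i, c i • g i) ∧
      LinearIndependent ℝ (fun i : {i // c' i ≠ 0} => g i.1) := by
    intro n
    induction n using Nat.strong_induction_on with
    | _ n ih =>
      intro c hcard hc
      by_cases hli : LinearIndependent ℝ (fun i : {i // c i ≠ 0} => g i.1)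
      · exact ⟨c, hc, rfl, hli⟩
      · obtain ⟨f, hfsum, hfne⟩ : ∃ f : {i // c i ≠ 0} → ℝ,
            (∑ i, f i • g i.1) = 0 ∧ ∃ i, 0 < f i := by
          obtain ⟨f, hfsum, i₀, hi₀⟩ := Fintype.not_linearIndependent_iff.1 hli
          rcases hi₀.lt_or_gt with hneg | hpos
          · refine ⟨-f, ?_, ⟨i₀, by simpa using hneg⟩⟩
            simp only [Pi.neg_apply, neg_smul, Finset.sum_neg_distrib, hfsum, neg_zero]
          · exact ⟨f, hfsum, i₀, hpos⟩
        set d : ι → ℝ := fun i => if h : c i ≠ 0 then f ⟨i, h⟩ else 0 with hd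
        have hd_of : ∀ i, c i = 0 → d i = 0 := by
          intro i hi; simp [hd, hi]
        have hdsum : (∑ i, d i • g i) = 0 := by
          have h1 : (∑ i, d i • g i)
              = ∑ i ∈ Finset.univ.filter (fun i => c i ≠ 0), d i • g i := by
            rw [Finset.sum_filter]
            refine Finset.sum_congr rfl fun i _ => ?_
            by_cases hci : c i = 0
            · simp [hci, hd_of i hci]
            · simp [hci]
          have h2 := Finset.sum_subtype (p := fun i => c i ≠ 0) (F := inferInstance)
            (s := Finset.univ.filter fun i => c i ≠ 0) (fun x => by simp)
            (fun i => d i • g i)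
          rw [h1, h2, ← hfsum]
          refine Finset.sum_congr rfl fun i _ => ?_
          simp [hd, i.2]
        obtain ⟨j₀, hj₀⟩ := hfne
        have hPne : (Finset.univ.filter fun i => 0 < d i).Nonempty := by
          refine ⟨j₀.1, ?_⟩
          simp only [Finset.mem_filter, Finset.mem_univ, true_and, hd]
          rw [dif_pos j₀.2]
          simpa using hj₀
        set P := Finset.univ.filter fun i => 0 < d i with hP
        set t := P.inf' hPne (fun i => c i / d i) with ht
        have hdpos : ∀ i ∈ P, 0 < d i := fun i hi => (Finset.mem_filter.1 hi).2
        have ht0 : 0 ≤ t := by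
          obtain ⟨i, hiP, hieq⟩ := Finset.exists_mem_eq_inf' hPne (fun i => c i / d i)
          rw [ht, hieq]
          exact div_nonneg (hc i) (hdpos i hiP).le
        set c' : ι → ℝ := fun i => c i - t * d i with hc'
        have hc'0 : ∀ i, 0 ≤ c' i := by
          intro i
          by_cases hdi : 0 < d i
          · have hle : t ≤ c i / d i := Finset.inf'_le _ (by simp [hP, hdi])
            have htd := mul_le_mul_of_nonneg_right hle hdi.le
            rw [div_mul_cancel₀ _ hdi.ne'] at htd
            simp only [hc']
            linarith
          · push_neg at hdi
            have : t * d i ≤ 0 := mul_nonpos_of_nonneg_of_nonpos ht0 hdi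
            simp only [hc']
            linarith [hc i]
        have hsum' : (∑ i, c' i • g i) = ∑ i, c i • g i := by
          simp only [hc', sub_smul, Finset.sum_sub_distrib, mul_smul, ← Finset.smul_sum, hdsum,
            smul_zero, sub_zero]
        have hsubset : (Finset.univ.filter fun i => c' i ≠ 0) ⊂
            (Finset.univ.filter fun i => c i ≠ 0) := by
          refine Finset.ssubset_iff_of_subset ?_ |>.2 ?_
          · intro i hi
            simp only [Finset.mem_filter, Finset.mem_univ, true_and] at hi ⊢
            intro hci
            exact hi (by simp [hc', hci, hd_of i hci])
          · obtain ⟨i, hiP, hieq⟩ := Finset.exists_mem_eq_inf' hPne (fun i => c i / d i)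
            refine ⟨i, ?_, ?_⟩
            · simp only [Finset.mem_filter, Finset.mem_univ, true_and]
              intro hci
              exact absurd (hd_of i hci ▸ hdpos i hiP) (by simp [hd_of i hci])
            · simp only [Finset.mem_filter, Finset.mem_univ, true_and, not_not]
              simp only [hc', ht, hieq]
              rw [div_mul_cancel₀ _ (hdpos i hiP).ne', sub_self]
        obtain ⟨c'', h1, h2, h3⟩ := ih _ (hcard ▸ Finset.card_lt_card hsubset) c' rfl hc'0
        exact ⟨c'', h1, h2.trans hsum', h3⟩
  obtain ⟨c', h1, h2, h3⟩ := key _ c₀ rfl hc₀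
  exact ⟨c', h1, hxc₀.trans h2.symm, h3⟩

theorem isClosed_icone [FiniteDimensional ℝ V] (g : ι → V) : IsClosed (icone g) := by
  classical
  set S : Finset ι → Set V := fun I =>
    {x | ∃ c : ι → ℝ, (∀ i, 0 ≤ c i) ∧ (∀ i, i ∉ I → c i = 0) ∧ x = ∑ i, c i • g i} with hS
  have hcover : icone g = ⋃ (I : Finset ι)
      (_ : LinearIndependent ℝ (fun i : ↥I => g i.1)), S I := by
    apply Set.Subset.antisymm
    · intro x hx
      obtain ⟨c, hc0, hcx, hcli⟩ := icone_caratheodory hx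
      set I : Finset ι := Finset.univ.filter (fun i => c i ≠ 0) with hI
      have hmem : ∀ i, i ∈ I ↔ c i ≠ 0 := fun i => by simp [hI]
      have hli : LinearIndependent ℝ (fun i : ↥I => g i.1) := by
        set e : ↥I ≃ {i // c i ≠ 0} := Equiv.subtypeEquivRight hmem with heq
        have he : ∀ j : ↥I, ((e j : {i // c i ≠ 0}) : ι) = (j : ι) := fun j => rfl
        rw [Fintype.linearIndependent_iff] at hcli ⊢
        intro cc hcc i
        have hsum : (∑ j : {i // c i ≠ 0}, cc (e.symm j) • g j.1) = 0 := by
          rw [← hcc]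
          refine (Fintype.sum_equiv e _ _ fun j => ?_).symm
          rw [he j, Equiv.symm_apply_apply]
        have hz := hcli _ hsum (e i)
        rwa [Equiv.symm_apply_apply] at hz
      refine Set.mem_iUnion.2 ⟨I, Set.mem_iUnion.2 ⟨hli, ?_⟩⟩
      exact ⟨c, hc0, fun i hi => by_contra fun hne => hi ((hmem i).2 hne), hcx⟩
    · intro x hx
      obtain ⟨I, hI⟩ := Set.mem_iUnion.1 hx
      obtain ⟨_, c, hc0, _, hcx⟩ := Set.mem_iUnion.1 hI
      exact ⟨c, hc0, hcx⟩
  rw [hcover]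
  refine isClosed_iUnion_of_finite fun I => ?_
  by_cases hli : LinearIndependent ℝ (fun i : ↥I => g i.1)
  swap
  · simp [hli]
  simp only [hli, Set.iUnion_true]
  set T : (↥I → ℝ) →ₗ[ℝ] V :=
    { toFun := fun c => ∑ i : ↥I, c i • g i.1
      map_add' := fun a b => by simp [add_smul, Finset.sum_add_distrib]
      map_smul' := fun t a => by simp [Finset.smul_sum, smul_smul] } with hT
  have key : ∀ c : ι → ℝ, (∀ i ∉ I, c i = 0) →
      (∑ i, c i • g i) = ∑ i : ↥I, c i.1 • g i.1 := by
    intro c hc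
    rw [Finset.sum_coe_sort I (fun i => c i • g i)]
    exact (Finset.sum_subset (Finset.subset_univ I)
      (fun i _ hi => by rw [hc i hi, zero_smul])).symm
  have hTinj : LinearMap.ker T = ⊥ := by
    rw [LinearMap.ker_eq_bot']
    intro c hc
    funext i
    exact Fintype.linearIndependent_iff.1 hli c hc i
  have himg : S I = T '' {c : ↥I → ℝ | ∀ i, 0 ≤ c i} := by
    apply Set.Subset.antisymm
    · rintro x ⟨c, hc0, hcI, rfl⟩
      exact ⟨fun i => c i.1, fun i => hc0 i.1, (key c hcI).symm⟩
    · rintro x ⟨c, hc0, rfl⟩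
      refine ⟨fun i => if h : i ∈ I then c ⟨i, h⟩ else 0, fun i => ?_, fun i hi => dif_neg hi, ?_⟩
      · by_cases h : i ∈ I
        · simpa [h] using hc0 ⟨i, h⟩
        · simp [h]
      · rw [key _ (fun i hi => dif_neg hi)]
        simp only [hT, LinearMap.coe_mk, AddHom.coe_mk]
        exact Finset.sum_congr rfl fun i _ => by rw [dif_pos i.2]
  rw [himg]
  have horth : IsClosed {c : ↥I → ℝ | ∀ i, 0 ≤ c i} := by
    have : {c : ↥I → ℝ | ∀ i, 0 ≤ c i} = ⋂ i, {c | 0 ≤ c i} := by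
      ext c; simp
    rw [this]
    exact isClosed_iInter fun i => isClosed_le continuous_const (continuous_apply i)
  exact (T.isClosedEmbedding_of_injective hTinj).isClosedMap _ horth

theorem exists_functional_of_not_mem_icone [FiniteDimensional ℝ V] {g : ι → V} {x : V}
    (hx : x ∉ icone g) : ∃ f : V →L[ℝ] ℝ, (∀ i, f (g i) ≤ 0) ∧ 0 < f x := by
  obtain ⟨f, u, hfs, hfx⟩ := geometric_hahn_banach_closed_point
    (s := icone g) (convex_icone g) (isClosed_icone g) hx
  have hu : 0 < u := by simpa using hfs 0 (zero_mem_icone g)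
  refine ⟨f, fun i => ?_, ?_⟩
  · by_contra hpos
    push_neg at hpos
    obtain ⟨t, ht0, htu⟩ : ∃ t : ℝ, 0 ≤ t ∧ u < t * f (g i) :=
      ⟨(u + 1) / f (g i), by positivity, by rw [div_mul_cancel₀ _ hpos.ne']; linarith⟩
    have := hfs (t • g i) (icone_smul ht0 (mem_icone_self g i))
    rw [map_smul, smul_eq_mul] at this
    linarith
  · linarith [hfs 0 (zero_mem_icone g), map_zero f]

/-- "R2": from a point of the intrinsic interior one can move slightly away from
any point of the set while staying in the set. -/
theorem exists_pos_overshoot {C : Set V} {x y : V}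
    (hx : x ∈ intrinsicInterior ℝ C) (hy : y ∈ C) :
    ∃ δ : ℝ, 0 < δ ∧ x + δ • (x - y) ∈ C := by
  obtain ⟨z, hz, hzx⟩ := mem_intrinsicInterior.1 hx
  have hxC : x ∈ C := intrinsicInterior_subset hx
  have hxA : x ∈ affineSpan ℝ C := subset_affineSpan ℝ C hxC
  have hyA : y ∈ affineSpan ℝ C := subset_affineSpan ℝ C hy
  -- the path `t ↦ x + t • (x - y)` stays in the affine span
  have hmem : ∀ t : ℝ, x + t • (x - y) ∈ affineSpan ℝ C := by
    intro t
    have := AffineSubspace.smul_vsub_vadd_mem (affineSpan ℝ C) t hxA hyA hxA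
    simpa [vsub_eq_sub, vadd_eq_add, add_comm] using this
  set φ : ℝ → affineSpan ℝ C := fun t => ⟨x + t • (x - y), hmem t⟩ with hφ
  have hφc : Continuous φ := by
    refine Continuous.subtype_mk ?_ _
    continuity
  have hφ0 : φ 0 = z := by
    apply Subtype.ext
    simp [hφ, hzx]
  have hopen : IsOpen (φ ⁻¹' interior ((↑) ⁻¹' C : Set (affineSpan ℝ C))) :=
    isOpen_interior.preimage hφc
  have h0 : (0 : ℝ) ∈ φ ⁻¹' interior ((↑) ⁻¹' C : Set (affineSpan ℝ C)) := by
    simp only [Set.mem_preimage, hφ0]; exact hz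
  obtain ⟨ε, hε, hball⟩ := Metric.isOpen_iff.1 hopen 0 h0
  refine ⟨ε / 2, by positivity, ?_⟩
  have : (ε / 2 : ℝ) ∈ Metric.ball (0 : ℝ) ε := by
    rw [Metric.mem_ball, Real.dist_eq, sub_zero, abs_of_pos (by positivity)]
    linarith
  have := interior_subset (hball this)
  simpa [hφ] using this

/-- "R1": a strictly positive combination of all the generators lies in the
intrinsic interior of the cone. -/
theorem mem_intrinsicInterior_icone [FiniteDimensional ℝ V] {g : ι → V} {c : ι → ℝ}
    (hc : ∀ i, 0 < c i) {x : V} (hx : x = ∑ i, c i • g i) :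
    x ∈ intrinsicInterior ℝ (icone g) := by
  classical
  set W : Submodule ℝ V := Submodule.span ℝ (Set.range g) with hW
  have hiconeW : icone g ⊆ (W : Set V) := by
    rintro _ ⟨cc, _, rfl⟩
    exact Submodule.sum_mem W fun i _ =>
      Submodule.smul_mem W _ (Submodule.subset_span (Set.mem_range_self i))
  -- affine span of the cone is W
  have hspan : ((affineSpan ℝ (icone g) : AffineSubspace ℝ V) : Set V) = (W : Set V) := by
    apply Set.Subset.antisymm
    · have : affineSpan ℝ (icone g) ≤ W.toAffineSubspace := by
        apply affineSpan_le.2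
        exact hiconeW
      exact this
    · intro w hw
      have hdir : W ≤ (affineSpan ℝ (icone g)).direction := by
        rw [direction_affineSpan]
        refine Submodule.span_le.2 ?_
        rintro _ ⟨i, rfl⟩
        have h := vsub_mem_vectorSpan ℝ (mem_icone_self g i) (zero_mem_icone g)
        simpa using h
      have h0 : (0 : V) ∈ affineSpan ℝ (icone g) := subset_affineSpan ℝ _ (zero_mem_icone g)
      have := AffineSubspace.vadd_mem_of_mem_direction (hdir hw) h0
      simpa using this
  -- the linear map sending coefficients to combinations, corestricted to W
  set T0 : (ι → ℝ) →ₗ[ℝ] V :=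
    { toFun := fun cc => ∑ i, cc i • g i
      map_add' := fun a b => by simp [add_smul, Finset.sum_add_distrib]
      map_smul' := fun t a => by simp [Finset.smul_sum, smul_smul] } with hT0
  have hT0W : ∀ cc, T0 cc ∈ W := fun cc =>
    Submodule.sum_mem W fun i _ =>
      Submodule.smul_mem W _ (Submodule.subset_span (Set.mem_range_self i))
  set T : (ι → ℝ) →ₗ[ℝ] W := T0.codRestrict W hT0W with hT
  have hsurj : Function.Surjective T := by
    intro w
    have hrange : W ≤ LinearMap.range T0 := by
      rw [hW]
      refine Submodule.span_le.2 ?_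
      rintro _ ⟨i, rfl⟩
      refine ⟨fun j => if j = i then 1 else 0, ?_⟩
      simp [hT0, ite_smul]
    obtain ⟨cc, hcc⟩ := hrange w.2
    exact ⟨cc, Subtype.ext (by simpa [hT] using hcc)⟩
  set Tc : (ι → ℝ) →L[ℝ] W := LinearMap.toContinuousLinearMap T with hTc
  have hopenmap : IsOpenMap Tc := ContinuousLinearMap.isOpenMap Tc hsurj
  set O : Set (ι → ℝ) := {cc | ∀ i, 0 < cc i} with hO
  have hOopen : IsOpen O := by
    have : O = ⋂ i, (fun cc : ι → ℝ => cc i) ⁻¹' Set.Ioi 0 := by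
      ext cc; simp [hO]
    rw [this]
    exact isOpen_iInter_of_finite fun i => (continuous_apply i).isOpen_preimage _ isOpen_Ioi
  have himgopen : IsOpen (Tc '' O) := hopenmap O hOopen
  have himgsub : Subtype.val '' (Tc '' O) ⊆ icone g := by
    rintro _ ⟨_, ⟨cc, hcc, rfl⟩, rfl⟩
    exact ⟨cc, fun i => (hcc i).le, rfl⟩
  have hxicone : x ∈ icone g := ⟨c, fun i => (hc i).le, hx⟩
  have hxW : x ∈ W := hiconeW hxicone
  have hpx : (⟨x, hxW⟩ : W) ∈ Tc '' O := ⟨c, hc, Subtype.ext (by simp [hTc, hT, hT0, hx])⟩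
  obtain ⟨G, hGopen, hGpre⟩ := isOpen_induced_iff.1 himgopen
  have hxA : x ∈ affineSpan ℝ (icone g) := by
    have : x ∈ ((affineSpan ℝ (icone g) : AffineSubspace ℝ V) : Set V) := by
      rw [hspan]; exact hxW
    exact this
  rw [mem_intrinsicInterior]
  refine ⟨⟨x, hxA⟩, ?_, rfl⟩
  rw [mem_interior]
  refine ⟨(↑) ⁻¹' G, ?_, hGopen.preimage continuous_subtype_val, ?_⟩
  · intro a ha
    have haW : (a : V) ∈ W := by
      have h2 : (a : V) ∈ (W : Set V) := by
        rw [← hspan]; exact a.2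
      exact h2
    have : (⟨(a : V), haW⟩ : W) ∈ Subtype.val ⁻¹' G := ha
    rw [hGpre] at this
    exact himgsub ⟨_, this, rfl⟩
  · have : (⟨x, hxW⟩ : W) ∈ Subtype.val ⁻¹' G := hGpre ▸ hpx
    exact this

end IconeBasics

section App
variable {d : ℕ} {E : Type*} [Fintype E]

theorem dotp_neg_left (w u : Fin d → ℝ) : dotp (-w) u = - dotp w u := by
  simp [dotp, Finset.sum_neg_distrib]

theorem exists_dotp_rep (f : (Fin d → ℝ) →L[ℝ] ℝ) : ∃ w : Fin d → ℝ, ∀ u, dotp w u = f u := by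
  refine ⟨fun i => f (Pi.single i 1), fun u => ?_⟩
  have hu : u = ∑ i, u i • (Pi.single i 1 : Fin d → ℝ) := by
    ext j
    rw [Finset.sum_apply]
    simp [Pi.single_apply]
  calc dotp (fun i => f (Pi.single i 1)) u = ∑ i, u i * f (Pi.single i 1) := by
        simp [dotp, mul_comm]
    _ = f u := by
        conv_rhs => rw [hu]
        rw [map_sum]
        simp [map_smul, smul_eq_mul]

variable (s v : E → (Fin d → ℝ))

/-- Generators of `V^G(s₀)`, padded with zeros. -/
noncomputable def gC (s₀ : Fin d → ℝ) : E → (Fin d → ℝ) := fun e => if s e = s₀ then v e else 0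

theorem coneAt_eq_icone : coneAt s v s₀ = icone (gC s v s₀) := by
  ext x
  constructor
  · rintro ⟨c, h0, hz, rfl⟩
    refine ⟨c, h0, Finset.sum_congr rfl fun e _ => ?_⟩
    by_cases he : s e = s₀
    · simp [gC, he]
    · simp [gC, he, hz e he]
  · rintro ⟨c, h0, rfl⟩
    refine ⟨fun e => if s e = s₀ then c e else 0, fun e => ?_, fun e he => if_neg he, ?_⟩
    · by_cases he : s e = s₀ <;> simp [he, h0 e]
    · refine Finset.sum_congr rfl fun e _ => ?_
      by_cases he : s e = s₀ <;> simp [gC, he]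

/-- Sum of all reaction vectors at `s₀`. -/
noncomputable def XB (s₀ : Fin d → ℝ) : Fin d → ℝ := ∑ e, gC s v s₀ e

/-- The difference family `s e - s₀`. -/
def Udiff (s₀ : Fin d → ℝ) : E → (Fin d → ℝ) := fun e => s e - s₀

/-- A source `s b` is a "good" target for `s₀`. -/
def GoodV (s₀ : Fin d → ℝ) (b : E) : Prop :=
  s b ≠ s₀ ∧ ∃ ε : ℝ, 0 < ε ∧ XB s v s₀ - ε • (s b - s₀) ∈ icone (Udiff s s₀)

open Classical in
/-- Generators of the cone of the modified network at `s₀`, padded with zeros. -/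
noncomputable def gA (s₀ : Fin d → ℝ) : E → (Fin d → ℝ) := fun b =>
  if GoodV s v s₀ b then s b - s₀ else 0

variable {s v}

/-- Endotacticity: every reaction vector lies in the cone of source differences. -/
theorem v_mem_icone_U (h : Endotactic s v) {e : E} {s₀ : Fin d → ℝ} (he : s e = s₀) :
    v e ∈ icone (Udiff s s₀) := by
  by_contra hnot
  obtain ⟨f, hf0, hfx⟩ := exists_functional_of_not_mem_icone hnot
  obtain ⟨w, hw⟩ := exists_dotp_rep f
  have hneg : dotp (-w) (v e) < 0 := by
    rw [dotp_neg_left, hw]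
    linarith
  obtain ⟨ej, hj1, _⟩ := h (-w) e hneg
  rw [dotp_neg_left, hw, he] at hj1
  have := hf0 ej
  simp only [Udiff] at this
  linarith

theorem gC_mem_icone_U (h : Endotactic s v) (s₀ : Fin d → ℝ) (e : E) :
    gC s v s₀ e ∈ icone (Udiff s s₀) := by
  by_cases he : s e = s₀
  · simpa [gC, he] using v_mem_icone_U h he
  · simpa [gC, he] using zero_mem_icone (Udiff s s₀)

theorem XB_mem_icone_U (h : Endotactic s v) (s₀ : Fin d → ℝ) :
    XB s v s₀ ∈ icone (Udiff s s₀) :=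
  icone_sum Finset.univ _ fun e _ => gC_mem_icone_U h s₀ e

theorem XB_sub_gC_mem_icone_U (h : Endotactic s v) (s₀ : Fin d → ℝ) (e : E) :
    XB s v s₀ - gC s v s₀ e ∈ icone (Udiff s s₀) := by
  classical
  have hkey : gC s v s₀ e + ∑ e' ∈ Finset.univ.erase e, gC s v s₀ e' = XB s v s₀ :=
    Finset.add_sum_erase _ _ (Finset.mem_univ e)
  have : XB s v s₀ - gC s v s₀ e = ∑ e' ∈ Finset.univ.erase e, gC s v s₀ e' := by
    rw [← hkey, add_sub_cancel_left]
  rw [this]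
  exact icone_sum _ _ fun e' _ => gC_mem_icone_U h s₀ e'

/-- Any element of the difference cone has a representation avoiding trivial differences. -/
theorem icone_U_cleanup {s₀ : Fin d → ℝ} {x : Fin d → ℝ} (hx : x ∈ icone (Udiff s s₀)) :
    ∃ c : E → ℝ, (∀ e, 0 ≤ c e) ∧ (∀ e, s e = s₀ → c e = 0) ∧
      x = ∑ e, c e • (s e - s₀) := by
  classical
  obtain ⟨c, h0, rfl⟩ := hx
  refine ⟨fun e => if s e = s₀ then 0 else c e, fun e => ?_, fun e he => if_pos he, ?_⟩
  · by_cases he : s e = s₀ <;> simp [he, h0 e]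
  · refine Finset.sum_congr rfl fun e _ => ?_
    by_cases he : s e = s₀ <;> simp [Udiff, he]

theorem good_of_rep (h : Endotactic s v) {s₀ : Fin d → ℝ} {c : E → ℝ} {r : Fin d → ℝ}
    (hc : ∀ e, 0 ≤ c e) (hr : r ∈ icone (Udiff s s₀))
    (hrep : XB s v s₀ = (∑ e, c e • (s e - s₀)) + r) :
    ∀ b, c b ≠ 0 → s b ≠ s₀ → GoodV s v s₀ b := by
  classical
  intro b hb hsb
  refine ⟨hsb, c b, (hc b).lt_of_ne' hb, ?_⟩
  have hkey : c b • (s b - s₀) + ∑ e ∈ Finset.univ.erase b, c e • (s e - s₀)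
      = ∑ e, c e • (s e - s₀) :=
    Finset.add_sum_erase _ (fun e => c e • (s e - s₀)) (Finset.mem_univ b)
  have hre : XB s v s₀ - c b • (s b - s₀)
      = (∑ e ∈ Finset.univ.erase b, c e • (s e - s₀)) + r := by
    rw [hrep, ← hkey]; abel
  rw [hre]
  refine icone_add (icone_sum _ _ fun e _ => ?_) hr
  exact icone_smul (hc e) (mem_icone_self (Udiff s s₀) e)

/-- Anything in the difference cone whose complement to `XB` is also in the difference
cone lies in the good cone. -/
theorem mem_icone_gA_of (h : Endotactic s v) {s₀ x : Fin d → ℝ}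
    (hx : x ∈ icone (Udiff s s₀)) (hrest : XB s v s₀ - x ∈ icone (Udiff s s₀)) :
    x ∈ icone (gA s v s₀) := by
  classical
  obtain ⟨c, hc0, hcz, hrep⟩ := icone_U_cleanup hx
  have hgood : ∀ b, c b ≠ 0 → GoodV s v s₀ b := by
    intro b hb
    have hsb : s b ≠ s₀ := fun hb' => hb (hcz b hb')
    refine good_of_rep h hc0 hrest ?_ b hb hsb
    rw [← hrep]; abel
  refine ⟨c, hc0, ?_⟩
  rw [hrep]
  refine Finset.sum_congr rfl fun b _ => ?_
  by_cases hb : c b = 0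
  · simp [hb]
  · rw [gA, if_pos (hgood b hb)]

theorem gC_mem_icone_gA (h : Endotactic s v) (s₀ : Fin d → ℝ) (e : E) :
    gC s v s₀ e ∈ icone (gA s v s₀) :=
  mem_icone_gA_of h (gC_mem_icone_U h s₀ e) (XB_sub_gC_mem_icone_U h s₀ e)

theorem XB_mem_icone_gA (h : Endotactic s v) (s₀ : Fin d → ℝ) :
    XB s v s₀ ∈ icone (gA s v s₀) :=
  mem_icone_gA_of h (XB_mem_icone_U h s₀) (by simpa using zero_mem_icone (Udiff s s₀))

theorem coneAt_subset_icone_gA (h : Endotactic s v) (s₀ : Fin d → ℝ) :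
    coneAt s v s₀ ⊆ icone (gA s v s₀) := by
  rw [coneAt_eq_icone]
  rintro x ⟨c, hc0, rfl⟩
  exact icone_sum _ _ fun e _ => icone_smul (hc0 e) (gC_mem_icone_gA h s₀ e)

theorem exists_good (h : Endotactic s v) (hv : ∀ e, v e ≠ 0) (a : E) :
    ∃ b, GoodV s v (s a) b := by
  have hva : v a ∈ icone (gA s v (s a)) := by
    have := gC_mem_icone_gA h (s a) a
    rwa [gC, if_pos rfl] at this
  obtain ⟨c, hc0, hrep⟩ := hva
  have hne : (∑ b, c b • gA s v (s a) b) ≠ 0 := hrep ▸ hv a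
  obtain ⟨b, _, hb⟩ := Finset.exists_ne_zero_of_sum_ne_zero hne
  refine ⟨b, ?_⟩
  by_contra hgb
  rw [gA, if_neg hgb, smul_zero] at hb
  exact hb rfl

theorem exists_fullsupport_XB (h : Endotactic s v) (s₀ : Fin d → ℝ) :
    ∃ lam : E → ℝ, (∀ e, 0 ≤ lam e) ∧ (∀ e, GoodV s v s₀ e → 0 < lam e) ∧
      XB s v s₀ = ∑ e, lam e • gA s v s₀ e := by
  classical
  -- a representation with a positive coefficient at a prescribed good index
  have hGrep : ∀ b, GoodV s v s₀ b → ∃ c : E → ℝ, (∀ e, 0 ≤ c e) ∧ 0 < c b ∧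
      XB s v s₀ = ∑ e, c e • gA s v s₀ e := by
    intro b hb
    obtain ⟨hsb, ε, hε, hmem⟩ := hb
    obtain ⟨c, hc0, hcz, hrep⟩ := icone_U_cleanup hmem
    set c' : E → ℝ := fun e => c e + (if e = b then ε else 0) with hc'
    have hc'0 : ∀ e, 0 ≤ c' e := fun e =>
      add_nonneg (hc0 e) (by by_cases hbe : e = b <;> simp [hbe, hε.le])
    have hsum : XB s v s₀ = ∑ e, c' e • (s e - s₀) := by
      simp only [hc', add_smul, Finset.sum_add_distrib, ite_smul, zero_smul,
        Finset.sum_ite_eq' Finset.univ b]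
      simp only [Finset.mem_univ, if_true]
      rw [← hrep]
      abel
    have hgood : ∀ e, c' e ≠ 0 → GoodV s v s₀ e := by
      intro e he
      have hse : s e ≠ s₀ := by
        intro hse
        apply he
        have : e ≠ b := fun hbe => hsb (hbe ▸ hse)
        simp [hc', hcz e hse, this]
      exact good_of_rep h hc'0 (by simpa using zero_mem_icone (Udiff s s₀))
        (by rw [← hsum]; abel) e he hse
    refine ⟨c', hc'0, by simp only [hc', eq_self_iff_true, if_true]; linarith [hc0 b], ?_⟩
    rw [hsum]
    refine Finset.sum_congr rfl fun e _ => ?_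
    by_cases he : c' e = 0
    · simp [he]
    · rw [gA, if_pos (hgood e he)]
  obtain ⟨c₀, hc₀0, hrep₀⟩ := XB_mem_icone_gA h s₀
  set F : E → (E → ℝ) := fun b => if hb : GoodV s v s₀ b then (hGrep b hb).choose else c₀
    with hF
  have hF0 : ∀ b e, 0 ≤ F b e := by
    intro b e
    by_cases hb : GoodV s v s₀ b
    · simp only [hF, dif_pos hb]; exact (hGrep b hb).choose_spec.1 e
    · simp only [hF, dif_neg hb]; exact hc₀0 e
  have hFpos : ∀ b, GoodV s v s₀ b → 0 < F b b := by
    intro b hb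
    simp only [hF, dif_pos hb]
    exact (hGrep b hb).choose_spec.2.1
  have hFrep : ∀ b, XB s v s₀ = ∑ e, F b e • gA s v s₀ e := by
    intro b
    by_cases hb : GoodV s v s₀ b
    · simp only [hF, dif_pos hb]; exact (hGrep b hb).choose_spec.2.2
    · simp only [hF, dif_neg hb]; exact hrep₀
  set n : ℝ := (Fintype.card E : ℝ) + 1 with hn
  have hnpos : (0 : ℝ) < n := by positivity
  refine ⟨fun e => (c₀ e + ∑ b, F b e) / n, fun e => ?_, fun e hge => ?_, ?_⟩
  · have : 0 ≤ c₀ e + ∑ b, F b e :=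
      add_nonneg (hc₀0 e) (Finset.sum_nonneg fun b _ => hF0 b e)
    positivity
  · refine div_pos ?_ hnpos
    have h1 : 0 < F e e := hFpos e hge
    have h2 : ∑ b, F b e ≥ F e e := by
      refine Finset.single_le_sum (f := fun b => F b e) (fun b _ => hF0 b e) (Finset.mem_univ e)
    have h3 : 0 ≤ c₀ e := hc₀0 e
    linarith
  · have hinner : (∑ e, (c₀ e + ∑ b, F b e) • gA s v s₀ e) = n • XB s v s₀ := by
      rw [Finset.sum_congr rfl fun e (_ : e ∈ Finset.univ) =>
        (add_smul (c₀ e) (∑ b, F b e) (gA s v s₀ e)), Finset.sum_add_distrib]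
      have hswap : (∑ e, (∑ b, F b e) • gA s v s₀ e)
          = ∑ b : E, ∑ e, F b e • gA s v s₀ e := by
        simp_rw [Finset.sum_smul]
        exact Finset.sum_comm
      rw [hswap, ← hrep₀,
        Finset.sum_congr rfl fun b (_ : b ∈ Finset.univ) => (hFrep b).symm,
        Finset.sum_const, Finset.card_univ, hn, add_smul, one_smul,
        ← Nat.cast_smul_eq_nsmul ℝ]
      exact add_comm _ _
    calc XB s v s₀ = (1 / n) • (n • XB s v s₀) := by
          rw [smul_smul, one_div, inv_mul_cancel₀ hnpos.ne', one_smul]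
      _ = ∑ e, ((c₀ e + ∑ b, F b e) / n) • gA s v s₀ e := by
          rw [← hinner, Finset.smul_sum]
          refine Finset.sum_congr rfl fun e _ => ?_
          rw [smul_smul, one_div, div_eq_inv_mul]

theorem coneAt_comp_equiv {κ : Type*} [Fintype κ] (eqv : κ ≃ E) (s₀ : Fin d → ℝ) :
    coneAt (s ∘ eqv) (v ∘ eqv) s₀ = coneAt s v s₀ := by
  ext x
  constructor
  · rintro ⟨c, h0, hz, rfl⟩
    refine ⟨c ∘ eqv.symm, fun e => h0 _, fun e he => hz _ (by simpa using he), ?_⟩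
    exact Fintype.sum_equiv eqv (fun k => c k • (v ∘ eqv) k)
      (fun e => (c ∘ eqv.symm) e • v e) (fun k => by simp)
  · rintro ⟨c, h0, hz, rfl⟩
    refine ⟨c ∘ eqv, fun k => h0 _, fun k hk => hz _ (by simpa using hk), ?_⟩
    exact (Fintype.sum_equiv eqv (fun k => (c ∘ eqv) k • (v ∘ eqv) k)
      (fun e => c e • v e) (fun k => by simp)).symm

section Construction

variable (h : Endotactic s v) (hv : ∀ e, v e ≠ 0)

open Classical in
/-- Target-choice for the modified network: a good partner for each pair. -/
noncomputable def tgt (s v : E → (Fin d → ℝ)) (gp : E → E) : E × E → E := fun p =>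
  if GoodV s v (s p.1) p.2 then p.2 else gp p.1

theorem coneAt_tilde_eq (gp : E → E) (hgp : ∀ a, GoodV s v (s a) (gp a))
    {s₀ : Fin d → ℝ} {e₀ : E} (he₀ : s e₀ = s₀) :
    coneAt (fun p : E × E => s p.1) (fun p : E × E => s (tgt s v gp p) - s p.1) s₀
      = icone (gA s v s₀) := by
  classical
  have htgt : ∀ p : E × E, GoodV s v (s p.1) (tgt s v gp p) := by
    intro p
    by_cases hp : GoodV s v (s p.1) p.2
    · rwa [tgt, if_pos hp]
    · rw [tgt, if_neg hp]; exact hgp p.1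
  ext x
  constructor
  · rintro ⟨c, hc0, hcz, rfl⟩
    set cE : E → ℝ := fun b => ∑ p : E × E, (if tgt s v gp p = b ∧ s p.1 = s₀ then c p else 0)
      with hcE
    have h1 : ∀ p : E × E, c p • (s (tgt s v gp p) - s p.1)
        = ∑ b, (if tgt s v gp p = b ∧ s p.1 = s₀ then c p else 0) • gA s v s₀ b := by
      intro p
      by_cases hp : s p.1 = s₀
      · rw [Finset.sum_eq_single (tgt s v gp p)]
        · have hG : GoodV s v s₀ (tgt s v gp p) := hp ▸ htgt p
          rw [if_pos ⟨rfl, hp⟩, gA, if_pos hG, hp]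
        · intro b _ hb
          rw [if_neg (fun hh => hb hh.1.symm), zero_smul]
        · intro hb; exact absurd (Finset.mem_univ _) hb
      · rw [hcz p hp, zero_smul]
        refine (Finset.sum_eq_zero fun b _ => ?_).symm
        rw [if_neg (fun hh => hp hh.2), zero_smul]
    refine ⟨cE, fun b => Finset.sum_nonneg fun p _ => ?_, ?_⟩
    · by_cases hb : tgt s v gp p = b ∧ s p.1 = s₀ <;> simp [hb, hc0 p]
    · rw [Finset.sum_congr rfl fun p (_ : p ∈ Finset.univ) => h1 p, Finset.sum_comm]
      refine Finset.sum_congr rfl fun b _ => ?_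
      rw [hcE, Finset.sum_smul]
  · rintro ⟨cb, hcb0, rfl⟩
    set c : E × E → ℝ := fun p => if p.1 = e₀ ∧ GoodV s v s₀ p.2 then cb p.2 else 0 with hc
    refine ⟨c, fun p => ?_, fun p hp => ?_, ?_⟩
    · by_cases hh : p.1 = e₀ ∧ GoodV s v s₀ p.2 <;> simp [hc, hh, hcb0]
    · refine if_neg fun hh => hp ?_
      show s p.1 = s₀
      rw [hh.1, he₀]
    · have houter : ∀ a : E, a ≠ e₀ →
          (∑ y : E, c (a, y) • ((fun p : E × E => s (tgt s v gp p) - s p.1) (a, y))) = 0 := by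
        intro a ha
        refine Finset.sum_eq_zero fun y _ => ?_
        rw [hc]
        simp only [if_neg (fun hh : a = e₀ ∧ _ => ha hh.1), zero_smul]
      rw [Fintype.sum_prod_type, Finset.sum_eq_single e₀ (fun a _ ha => houter a ha)
        (fun hb => absurd (Finset.mem_univ _) hb)]
      refine Finset.sum_congr rfl fun b _ => ?_
      by_cases hGb : GoodV s v s₀ b
      · have hG' : GoodV s v (s e₀) b := he₀ ▸ hGb
        have htgtb : tgt s v gp (e₀, b) = b := by
          show (if GoodV s v (s (e₀, b).1) (e₀, b).2 then (e₀, b).2 else gp (e₀, b).1) = b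
          exact if_pos hG'
        simp [hc, gA, htgtb, hGb, he₀]
      · simp [hc, gA, hGb]

end Construction

theorem tgt_good (gp : E → E) (hgp : ∀ a, GoodV s v (s a) (gp a)) (p : E × E) :
    GoodV s v (s p.1) (tgt s v gp p) := by
  classical
  by_cases hp : GoodV s v (s p.1) p.2
  · show GoodV s v (s p.1) (if GoodV s v (s p.1) p.2 then p.2 else gp p.1)
    rwa [if_pos hp]
  · show GoodV s v (s p.1) (if GoodV s v (s p.1) p.2 then p.2 else gp p.1)
    rw [if_neg hp]; exact hgp p.1

end App

/-- Endotactic networks are effectively source-only: for every endotactic network `G`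
there is a network `G~` (with edges `Fin m`, sources `s'`, reaction vectors `v'`, targets
`s' + v'`) whose node set equals the set of source vectors of `G`, which is source-only,
and which includes the dynamics of `G`. -/
theorem endotactic_effectively_sourceOnly {d : ℕ} {E : Type*} [Fintype E]
    (s v : E → (Fin d → ℝ)) (hv : ∀ e, v e ≠ 0) (h : Endotactic s v) :
    ∃ (m : ℕ) (s' v' : Fin m → (Fin d → ℝ)),
      (∀ e', v' e' ≠ 0) ∧
      -- sources of G~ lie in the source set of G
      (∀ e', ∃ e : E, s e = s' e') ∧
      -- targets of G~ lie in the source set of G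
      (∀ e', ∃ e : E, s e = s' e' + v' e') ∧
      -- every source of G is a source of G~ (hence the node set of G~ equals SC_G)
      (∀ e : E, ∃ e', s' e' = s e) ∧
      -- G~ is source-only: every target of G~ is a source of G~
      (∀ e', ∃ e'', s' e'' = s' e' + v' e') ∧
      -- G~ includes the dynamics of G
      (∀ s₀ : Fin d → ℝ, (∃ e : E, s e = s₀) →
        intrinsicInterior ℝ (coneAt s v s₀) ⊆ intrinsicInterior ℝ (coneAt s' v' s₀)) := by
  classical
  choose gp hgp using exists_good h hv
  set eqv : Fin (Fintype.card (E × E)) ≃ E × E := (Fintype.equivFin (E × E)).symm with heqv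
  refine ⟨Fintype.card (E × E), (fun p : E × E => s p.1) ∘ eqv,
    (fun p : E × E => s (tgt s v gp p) - s p.1) ∘ eqv, ?_, ?_, ?_, ?_, ?_, ?_⟩
  · intro k
    exact sub_ne_zero.2 (tgt_good gp hgp (eqv k)).1
  · intro k
    exact ⟨(eqv k).1, rfl⟩
  · intro k
    refine ⟨tgt s v gp (eqv k), ?_⟩
    show s (tgt s v gp (eqv k)) = s (eqv k).1 + (s (tgt s v gp (eqv k)) - s (eqv k).1)
    abel
  · intro e
    refine ⟨eqv.symm (e, e), ?_⟩
    show s (eqv (eqv.symm (e, e))).1 = s e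
    rw [Equiv.apply_symm_apply]
  · intro k
    refine ⟨eqv.symm (tgt s v gp (eqv k), tgt s v gp (eqv k)), ?_⟩
    show s (eqv (eqv.symm _)).1 = s (eqv k).1 + (s (tgt s v gp (eqv k)) - s (eqv k).1)
    rw [Equiv.apply_symm_apply]
    abel
  · rintro s₀ ⟨e₀, he₀⟩ x hx
    have hcone : coneAt ((fun p : E × E => s p.1) ∘ eqv)
        ((fun p : E × E => s (tgt s v gp p) - s p.1) ∘ eqv) s₀ = icone (gA s v s₀) := by
      rw [coneAt_comp_equiv eqv s₀]
      exact coneAt_tilde_eq gp hgp he₀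
    have hXBmem : XB s v s₀ ∈ coneAt s v s₀ := by
      rw [coneAt_eq_icone]
      exact ⟨fun _ => 1, fun _ => zero_le_one, by simp [XB]⟩
    obtain ⟨δ, hδ, hz⟩ := exists_pos_overshoot hx hXBmem
    obtain ⟨mm, hmm0, hmrep⟩ := coneAt_subset_icone_gA h s₀ hz
    obtain ⟨lam, hlam0, hlampos, hlamrep⟩ := exists_fullsupport_XB h s₀
    have h1δ : (0 : ℝ) < 1 + δ := by linarith
    set ν : E → ℝ := fun b =>
      (mm b + δ * lam b) / (1 + δ) + (if GoodV s v s₀ b then 0 else 1) with hν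
    have hνpos : ∀ b, 0 < ν b := by
      intro b
      by_cases hb : GoodV s v s₀ b
      · have hp := mul_pos hδ (hlampos b hb)
        simp only [hν, if_pos hb, add_zero]
        exact div_pos (by linarith [hmm0 b]) h1δ
      · simp only [hν, if_neg hb]
        have hp := mul_nonneg hδ.le (hlam0 b)
        have : 0 ≤ (mm b + δ * lam b) / (1 + δ) :=
          div_nonneg (by linarith [hmm0 b]) h1δ.le
        linarith
    have hterm : ∀ b, ν b • gA s v s₀ b
        = ((mm b + δ * lam b) / (1 + δ)) • gA s v s₀ b := by
      intro b
      by_cases hb : GoodV s v s₀ b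
      · simp [hν, hb]
      · rw [gA, if_neg hb]; simp
    have hfinal : (∑ b, ν b • gA s v s₀ b) = x := by
      have hinj : Function.Injective (fun y : Fin d → ℝ => (1 + δ) • y) :=
        smul_right_injective _ h1δ.ne'
      apply hinj
      show (1 + δ) • (∑ b, ν b • gA s v s₀ b) = (1 + δ) • x
      have hper : ∀ b, (1 + δ) • (ν b • gA s v s₀ b)
          = mm b • gA s v s₀ b + δ • (lam b • gA s v s₀ b) := by
        intro b
        have hco : (1 + δ) * ((mm b + δ * lam b) / (1 + δ)) = mm b + δ * lam b := by
          field_simp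
        rw [hterm b, smul_smul, hco, add_smul, smul_smul]
      calc (1 + δ) • (∑ b, ν b • gA s v s₀ b)
          = ∑ b, ((mm b • gA s v s₀ b) + δ • (lam b • gA s v s₀ b)) := by
            rw [Finset.smul_sum]
            exact Finset.sum_congr rfl fun b _ => hper b
        _ = (∑ b, mm b • gA s v s₀ b) + δ • (∑ b, lam b • gA s v s₀ b) := by
            rw [Finset.sum_add_distrib, Finset.smul_sum]
        _ = (x + δ • (x - XB s v s₀)) + δ • XB s v s₀ := by
            rw [← hmrep, ← hlamrep]
        _ = (1 + δ) • x := by module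
    rw [hcone]
    exact mem_intrinsicInterior_icone hνpos hfinal.symm
end

section
/- Splitting reactions preserves generated dynamics: let G be a reaction network, e an edge of G, and e_1, ..., e_m new edges all with source s(e_i) = s(e) such that v(e) lies in the relative interior of the cone generated by v(e_1), ..., v(e_m). Then the network G_e obtained from G by deleting e and adding e_1, ..., e_m includes the dynamics of G: for every choice of positive rate constants for G there is a choice of positive rate constants for G_e producing the same mass action vector field. -/
/-- The cone generated by finitely many vectors `u 0, …, u (m-1)`. -/
def coneOf {d m : ℕ} (u : Fin m → (Fin d → ℝ)) : Set (Fin d → ℝ) :=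
  {x | ∃ c : Fin m → ℝ, (∀ i, 0 ≤ c i) ∧ x = ∑ i, c i • u i}

/-- A point of the intrinsic interior of a finitely generated cone is a strictly positive
combination of the generators. -/
lemma exists_pos_comb {d m : ℕ} (u : Fin m → (Fin d → ℝ)) {x : Fin d → ℝ}
    (hx : x ∈ intrinsicInterior ℝ (coneOf u)) :
    ∃ c : Fin m → ℝ, (∀ i, 0 < c i) ∧ x = ∑ i, c i • u i := by
  obtain ⟨p, hp, hpx⟩ := mem_intrinsicInterior.mp hx
  set y : Fin d → ℝ := ∑ i, u i with hy
  have hyc : y ∈ coneOf u := ⟨fun _ => 1, fun _ => zero_le_one, by simp [hy]⟩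
  have hyspan : y ∈ affineSpan ℝ (coneOf u) := mem_affineSpan ℝ hyc
  have hxspan : x ∈ affineSpan ℝ (coneOf u) := hpx ▸ p.2
  have hmem : ∀ t : ℝ, t • (x - y) + y ∈ affineSpan ℝ (coneOf u) := by
    intro t
    have := AffineMap.lineMap_mem (k := ℝ) t hyspan hxspan
    rw [AffineMap.lineMap_apply_module] at this
    convert this using 1
    rw [smul_sub, sub_smul, one_smul]
    abel
  set γ : ℝ → affineSpan ℝ (coneOf u) := fun t => ⟨t • (x - y) + y, hmem t⟩ with hγ
  have hγcont : Continuous γ := by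
    apply Continuous.subtype_mk
    exact (continuous_id.smul continuous_const).add continuous_const
  have hγ1 : γ 1 = p := by
    apply Subtype.ext
    simp [hγ, hpx]
  have hopen : IsOpen (γ ⁻¹' interior ((↑) ⁻¹' coneOf u : Set (affineSpan ℝ (coneOf u)))) :=
    hγcont.isOpen_preimage _ isOpen_interior
  have h1 : (1 : ℝ) ∈ γ ⁻¹' interior ((↑) ⁻¹' coneOf u : Set (affineSpan ℝ (coneOf u))) := by
    simp only [Set.mem_preimage, hγ1]; exact hp
  obtain ⟨ε, hε, hball⟩ := Metric.isOpen_iff.mp hopen 1 h1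
  set t : ℝ := 1 + ε / 2 with ht
  have ht1 : (1 : ℝ) < t := by simp [ht]; linarith
  have ht0 : (0 : ℝ) < t := lt_trans one_pos ht1
  have htball : t ∈ Metric.ball (1 : ℝ) ε := by
    simp only [Metric.mem_ball, Real.dist_eq, ht]
    rw [abs_of_pos (by linarith)]
    linarith
  have hz : γ t ∈ ((↑) ⁻¹' coneOf u : Set (affineSpan ℝ (coneOf u))) :=
    interior_subset (hball htball)
  obtain ⟨a, ha, haz⟩ := hz
  have hxcomb : x = t⁻¹ • (t • (x - y) + y) + (1 - t⁻¹) • y := by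
    rw [smul_add, smul_smul, inv_mul_cancel₀ ht0.ne', one_smul, sub_smul, one_smul]
    abel
  refine ⟨fun i => t⁻¹ * a i + (1 - t⁻¹), fun i => ?_, ?_⟩
  · have h1 : 0 < t⁻¹ := inv_pos.mpr ht0
    have h2 : t⁻¹ < 1 := inv_lt_one_of_one_lt₀ ht1
    have := ha i
    nlinarith
  · have hzval : (t • (x - y) + y : Fin d → ℝ) = ∑ i, a i • u i := haz
    rw [hxcomb, hzval, hy, Finset.smul_sum, Finset.smul_sum, ← Finset.sum_add_distrib]
    refine Finset.sum_congr rfl fun i _ => ?_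
    rw [add_smul, smul_smul]

/-- Splitting reactions preserves generated dynamics: if `e₀` is an edge of `G` and
`e₁, …, e_m` are new edges with source `s e₀` and reaction vectors `u 1, …, u m` such that
`v e₀` lies in the relative interior of the cone generated by the `u i`, then the network
`G_{e₀}` obtained by deleting `e₀` and adding the new edges includes the dynamics of `G`. -/
theorem splitting_preserves_dynamics {d : ℕ} {E : Type*} [Fintype E] [DecidableEq E]
    (s v : E → (Fin d → ℝ)) (hs : ∀ e i, 0 ≤ s e i) (hv : ∀ e, v e ≠ 0)
    (e₀ : E) (m : ℕ) (u : Fin m → (Fin d → ℝ)) (hu : ∀ i, u i ≠ 0)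
    (hsplit : v e₀ ∈ intrinsicInterior ℝ (coneOf u)) :
    ∀ k : E → ℝ, (∀ e, 0 < k e) →
      ∃ k' : ({e : E // e ≠ e₀} ⊕ Fin m) → ℝ, (∀ e', 0 < k' e') ∧
        ∀ x : Fin d → ℝ, (∀ i, 0 < x i) →
          massAction (Sum.elim (fun e => s e.1) (fun _ => s e₀))
            (Sum.elim (fun e => v e.1) u) k' x = massAction s v k x := by
  intro k hk
  obtain ⟨c, hc, hcv⟩ := exists_pos_comb u hsplit
  refine ⟨Sum.elim (fun e => k e.1) (fun i => k e₀ * c i), ?_, ?_⟩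
  · rintro (e | i)
    · exact hk e.1
    · exact mul_pos (hk e₀) (hc i)
  · intro x hx
    unfold massAction
    rw [Fintype.sum_sum_type]
    simp only [Sum.elim_inl, Sum.elim_inr]
    have h2 : ∑ i : Fin m, (k e₀ * c i * ∏ j, x j ^ s e₀ j) • u i
        = (k e₀ * ∏ j, x j ^ s e₀ j) • v e₀ := by
      rw [hcv, Finset.smul_sum]
      refine Finset.sum_congr rfl fun i _ => ?_
      rw [smul_smul]
      ring_nf
    rw [h2]
    have h1 : ∑ e : {e : E // e ≠ e₀}, (k e.1 * ∏ j, x j ^ s e.1 j) • v e.1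
        = ∑ e ∈ Finset.univ.erase e₀, (k e * ∏ j, x j ^ s e j) • v e := by
      rw [← Finset.sum_subtype (Finset.univ.erase e₀) (p := fun e => e ≠ e₀)
        (fun e => by simp [Finset.mem_erase]) (fun e => (k e * ∏ j, x j ^ s e j) • v e)]
    rw [h1, ← Finset.add_sum_erase _ _ (Finset.mem_univ e₀)]
    abel
end

section
/- Any polynomial dynamical system generated by a reaction network can also be generated by a consistent network: given a reaction network G with positive rate constants K generating the vector field f_{G(K)}, there exists a consistent reaction network G' and positive rate constants K' with f_{G'(K')} = f_{G(K)}. In particular, G' may be obtained from G by adding finitely many edges e_1*, ..., e_p* sharing a common source s* not in SC_G, such that the cone generated by v(e_1*), ..., v(e_p*) equals the span of the reaction vectors of G. -/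
/-- Any mass action system generated by a reaction network `G` can also be generated by a
consistent network `G'`, obtained from `G` by adding finitely many edges `e₁*, …, e_p*`
sharing a common new source `s*` (not a source of `G`), whose reaction vectors generate,
as a cone, the span of the reaction vectors of `G`. -/
theorem generated_by_consistent {d : ℕ} {E : Type*} [Fintype E]
    (s v : E → (Fin d → ℝ)) (hs : ∀ e i, 0 ≤ s e i) (hv : ∀ e, v e ≠ 0)
    (hspan : ∃ e : E, v e ≠ 0)
    (sstar : Fin d → ℝ) (hstar : ∀ i, 0 ≤ sstar i) (hnew : ∀ e, s e ≠ sstar)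
    (k : E → ℝ) (hk : ∀ e, 0 < k e) :
    ∃ (p : ℕ) (u : Fin p → (Fin d → ℝ)) (k' : (E ⊕ Fin p) → ℝ),
      (∀ j, u j ≠ 0) ∧
      -- the cone generated by the new reaction vectors equals the span of those of G
      ({x : Fin d → ℝ | ∃ c : Fin p → ℝ, (∀ j, 0 ≤ c j) ∧ x = ∑ j, c j • u j} =
        ↑(Submodule.span ℝ (Set.range v))) ∧
      (∀ e', 0 < k' e') ∧
      -- G' is consistent
      (∃ a : (E ⊕ Fin p) → ℝ, (∀ e', 0 < a e') ∧
        ∑ e', a e' • (Sum.elim v u) e' = 0) ∧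
      -- G' generates the same mass action system as G
      (∀ x : Fin d → ℝ, (∀ i, 0 < x i) →
        massAction (Sum.elim s (fun _ => sstar)) (Sum.elim v u) k' x = massAction s v k x) := by
  classical
  set q := Fintype.card (E ⊕ E) with hq
  set φ : (E ⊕ E) ≃ Fin q := Fintype.equivFin _ with hφ
  set w : (E ⊕ E) → (Fin d → ℝ) := Sum.elim v (fun e => -v e) with hw
  -- key sum transport lemma
  have hsum : ∀ (F : (E ⊕ E) → (Fin d → ℝ)),
      ∑ j : Fin q, F (φ.symm j) = ∑ y, F y := by
    intro F
    exact Equiv.sum_comp φ.symm F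
  refine ⟨q, fun j => w (φ.symm j), Sum.elim k (fun _ => 1), ?_, ?_, ?_, ?_, ?_⟩
  · intro j
    cases h : φ.symm j with
    | inl e => simpa [hw, h] using hv e
    | inr e => simpa [hw, h] using hv e
  · ext x
    simp only [Set.mem_setOf_eq, SetLike.mem_coe]
    constructor
    · rintro ⟨c, hc, rfl⟩
      refine Submodule.sum_mem _ (fun j _ => Submodule.smul_mem _ _ ?_)
      cases h : φ.symm j with
      | inl e =>
        simp only [hw, h, Sum.elim_inl]
        exact Submodule.subset_span ⟨e, rfl⟩
      | inr e =>
        simp only [hw, h, Sum.elim_inr]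
        exact Submodule.neg_mem _ (Submodule.subset_span ⟨e, rfl⟩)
    · intro hx
      rw [Submodule.mem_span_range_iff_exists_fun] at hx
      obtain ⟨c, hc⟩ := hx
      refine ⟨fun j => Sum.elim (fun e => max (c e) 0) (fun e => max (-c e) 0) (φ.symm j),
        ?_, ?_⟩
      · intro j
        cases h : φ.symm j with
        | inl e => simp [h]
        | inr e => simp [h]
      · rw [hsum (fun y => Sum.elim (fun e => max (c e) 0) (fun e => max (-c e) 0) y • w y)]
        rw [Fintype.sum_sum_type]
        simp only [hw, Sum.elim_inl, Sum.elim_inr, smul_neg]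
        rw [← Finset.sum_add_distrib]
        have : ∀ e, max (c e) 0 • v e + -(max (-c e) 0 • v e) = c e • v e := by
          intro e
          rw [← neg_smul, ← add_smul]
          congr 1
          rcases le_or_gt 0 (c e) with h | h
          · rw [max_eq_left h, max_eq_right (by linarith)]; ring
          · rw [max_eq_right h.le, max_eq_left (by linarith)]; ring
        simp_rw [this]
        exact hc.symm
  · intro e'
    cases e' with
    | inl e => simpa using hk e
    | inr j => simp
  · refine ⟨Sum.elim (fun _ => 1) (fun j => Sum.elim (fun _ => (1:ℝ)) (fun _ => 2) (φ.symm j)),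
      ?_, ?_⟩
    · intro e'
      cases e' with
      | inl e => simp
      | inr j =>
        cases h : φ.symm j with
        | inl e => simp [h]
        | inr e => simp [h]
    · rw [Fintype.sum_sum_type]
      simp only [Sum.elim_inl, Sum.elim_inr, one_smul]
      rw [hsum (fun y => Sum.elim (fun _ => (1:ℝ)) (fun _ => 2) y • w y)]
      rw [Fintype.sum_sum_type]
      simp only [hw, Sum.elim_inl, Sum.elim_inr, one_smul, smul_neg]
      rw [← Finset.sum_add_distrib, ← Finset.sum_add_distrib]
      apply Finset.sum_eq_zero
      intro e _
      rw [two_smul]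
      abel
  · intro x hx
    unfold massAction
    rw [Fintype.sum_sum_type]
    simp only [Sum.elim_inl, Sum.elim_inr, one_mul]
    have h2 : ∑ j : Fin q, (∏ i, x i ^ sstar i) • w (φ.symm j) = 0 := by
      rw [← Finset.smul_sum, hsum w, Fintype.sum_sum_type]
      simp [hw, Finset.sum_neg_distrib]
    rw [h2, add_zero]
end

section
/- If a reaction network G is not consistent, then G is not endotactic: if there is no choice of positive constants a_e with sum_e a_e v(e) = 0, then there exists a direction w in R^d and an edge e_i with w·v(e_i) < 0 such that no edge e_j satisfies both w·(s(e_j) - s(e_i)) < 0 and w·v(e_j) > 0. -/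
open Pointwise

section Aux

variable {d : ℕ} {E : Type*} [Fintype E] [Nonempty E]

theorem stiemke_aux (v : E → (Fin d → ℝ))
    (h : ¬ ∃ a : E → ℝ, (∀ e, 0 < a e) ∧ ∑ e, a e • v e = 0) :
    ∃ (w : Fin d → ℝ) (e0 : E), (∑ i, w i * v e0 i) < 0 ∧
      ∀ e, (∑ i, w i * v e i) ≤ 0 := by
  classical
  set P : Finset E → Prop := fun S =>
    ∃ a : E → ℝ, (∀ e ∈ S, 0 < a e) ∧ (∀ e ∉ S, a e = 0) ∧ ∑ e, a e • v e = 0 with hPdef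
  have hPempty : P ∅ := ⟨0, by simp, by simp, by simp⟩
  obtain ⟨S, hPS, hmax⟩ : ∃ S, P S ∧ ∀ T, P T → T.card ≤ S.card := by
    obtain ⟨S, hS, hSmax⟩ := (Finset.univ.filter P).exists_max_image Finset.card
      ⟨∅, Finset.mem_filter.mpr ⟨Finset.mem_univ _, hPempty⟩⟩
    exact ⟨S, (Finset.mem_filter.mp hS).2,
      fun T hT => hSmax T (Finset.mem_filter.mpr ⟨Finset.mem_univ _, hT⟩)⟩
  obtain ⟨a, haS, haS', hasum⟩ := hPS
  obtain ⟨e0, he0⟩ : ∃ e0, e0 ∉ S := by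
    by_contra hc
    push_neg at hc
    exact h ⟨a, fun e => haS e (hc e), hasum⟩
  -- the linear map from weights on the complement of S
  set φ : (↥(Sᶜ) → ℝ) →ₗ[ℝ] (Fin d → ℝ) :=
    { toFun := fun lam => ∑ x, lam x • v x.1
      map_add' := by
        intro x y
        simp [add_smul, Finset.sum_add_distrib]
      map_smul' := by
        intro c x
        simp [smul_smul, Finset.smul_sum] } with hφdef
  set U : Submodule ℝ (Fin d → ℝ) :=
    Submodule.span ℝ (Set.range fun x : ↥S => v x.1) with hUdef
  set C0 : Set (Fin d → ℝ) := φ '' stdSimplex ℝ ↥(Sᶜ) with hC0def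
  set C : Set (Fin d → ℝ) := C0 + (U : Set (Fin d → ℝ)) with hCdef
  have hC0cvx : Convex ℝ C0 := (convex_stdSimplex ℝ _).linear_image φ
  have hC0cpt : IsCompact C0 :=
    (isCompact_stdSimplex ℝ _).image φ.continuous_of_finiteDimensional
  have hCcvx : Convex ℝ C := hC0cvx.add U.convex
  have hCclosed : IsClosed C :=
    IsClosed.add_left_of_isCompact (Submodule.closed_of_finiteDimensional U) hC0cpt
  -- membership fact
  have hmem : ∀ (e : E), e ∉ S → ∀ z : Fin d → ℝ, z ∈ U → v e + z ∈ C := by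
    intro e he z hz
    refine Set.add_mem_add ?_ hz
    refine ⟨fun x => if x = ⟨e, Finset.mem_compl.mpr he⟩ then 1 else 0,
      ⟨fun x => ?_, ?_⟩, ?_⟩
    · dsimp only; split <;> norm_num
    · simp
    · simp [hφdef, ite_smul]
  have hasumS : ∑ e ∈ S, a e • v e = 0 := by
    have h1 : ∑ e ∈ S, a e • v e + ∑ e ∈ Sᶜ, a e • v e = ∑ e, a e • v e :=
      Finset.sum_add_sum_compl S _
    have h2 : ∑ e ∈ Sᶜ, a e • v e = 0 :=
      Finset.sum_eq_zero fun e he => by rw [haS' e (Finset.mem_compl.mp he), zero_smul]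
    rw [h2, add_zero, hasum] at h1
    exact h1
  -- the key fact: 0 ∉ C
  have h0C : (0 : Fin d → ℝ) ∉ C := by
    intro h0
    rw [hCdef, Set.mem_add] at h0
    obtain ⟨y, hy, z, hz, hyz⟩ := h0
    obtain ⟨lam, hlam, rfl⟩ := hy
    rw [SetLike.mem_coe, hUdef, Submodule.mem_span_range_iff_exists_fun] at hz
    obtain ⟨c, hc⟩ := hz
    set M : ℝ := 1 + ∑ x : ↥S, |c x| / a x with hMdef
    set c' : E → ℝ := fun e => if he : e ∈ S then c ⟨e, he⟩ else 0 with hc'def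
    set lam' : E → ℝ := fun e => if he : e ∈ Sᶜ then lam ⟨e, he⟩ else 0 with hlam'def
    set b : E → ℝ := fun e => c' e + M * a e + lam' e with hbdef
    have hbS : ∀ e ∈ S, 0 < b e := by
      intro e he
      have hae : 0 < a e := haS e he
      have hM1 : |c ⟨e, he⟩| / a e ≤ M - 1 := by
        rw [hMdef, add_sub_cancel_left]
        exact Finset.single_le_sum
          (f := fun x : ↥S => |c x| / a x)
          (fun x _ => div_nonneg (abs_nonneg _) (haS x.1 x.2).le)
          (Finset.mem_univ (⟨e, he⟩ : ↥S))
      have hMa : a e + |c ⟨e, he⟩| ≤ M * a e := by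
        have := (div_le_iff₀ hae).mp hM1
        nlinarith
      have h1 : -c ⟨e, he⟩ ≤ |c ⟨e, he⟩| := neg_le_abs _
      have h2 : c' e = c ⟨e, he⟩ := by rw [hc'def]; simp [he]
      have h3 : lam' e = 0 := by
        rw [hlam'def]; simp [Finset.mem_compl, he]
      rw [hbdef]
      dsimp only
      rw [h2, h3]
      linarith
    have hbSc' : ∀ (e : E) (he : e ∉ S), b e = lam ⟨e, Finset.mem_compl.mpr he⟩ := by
      intro e he
      have h2 : c' e = 0 := by rw [hc'def]; simp [he]
      have h3 : a e = 0 := haS' e he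
      have h4 : lam' e = lam ⟨e, Finset.mem_compl.mpr he⟩ := by
        rw [hlam'def]; simp [Finset.mem_compl, he]
      rw [hbdef]; dsimp only; rw [h2, h3, h4]; ring
    -- the sum of b e • v e is zero
    have hsumc' : ∑ e, c' e • v e = z := by
      rw [← hc]
      rw [← Finset.sum_subset (Finset.subset_univ S)
        (fun e _ he => by rw [hc'def]; simp [he])]
      rw [← Finset.sum_coe_sort S (fun e => c' e • v e)]
      apply Finset.sum_congr rfl
      intro x _
      congr 1
      rw [hc'def]
      simp [x.2]
    have hsumlam' : ∑ e, lam' e • v e = φ lam := by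
      rw [hφdef]
      show _ = ∑ x : ↥(Sᶜ), lam x • v x.1
      rw [← Finset.sum_subset (Finset.subset_univ Sᶜ)
        (fun e _ he => by rw [hlam'def]; simp [he])]
      rw [← Finset.sum_coe_sort Sᶜ (fun e => lam' e • v e)]
      apply Finset.sum_congr rfl
      intro x _
      congr 1
      rw [hlam'def]
      simp [x.2]
    have hbsum : ∑ e, b e • v e = 0 := by
      have : ∀ e, b e • v e = c' e • v e + M • (a e • v e) + lam' e • v e := by
        intro e
        rw [hbdef]
        dsimp only
        rw [add_smul, add_smul, smul_smul]
      rw [Finset.sum_congr rfl fun e _ => this e]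
      rw [Finset.sum_add_distrib, Finset.sum_add_distrib, ← Finset.smul_sum]
      rw [hsumc', hsumlam', hasum, smul_zero, add_zero, add_comm]
      exact hyz
    -- some lam is positive
    obtain ⟨x0, hx0⟩ : ∃ x : ↥(Sᶜ), 0 < lam x := by
      by_contra hcon
      push_neg at hcon
      have h1 : ∑ x : ↥(Sᶜ), lam x ≤ 0 := Finset.sum_nonpos fun x _ => hcon x
      rw [hlam.2] at h1
      linarith
    set T : Finset E := S ∪ Sᶜ.filter (fun e => 0 < b e) with hTdef
    have hPT : P T := by
      refine ⟨b, ?_, ?_, hbsum⟩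
      · intro e he
        rcases Finset.mem_union.mp he with h1 | h1
        · exact hbS e h1
        · exact (Finset.mem_filter.mp h1).2
      · intro e he
        rw [hTdef, Finset.mem_union, not_or] at he
        obtain ⟨he1, he2⟩ := he
        have hb' := hbSc' e he1
        have hnn : 0 ≤ b e := hb' ▸ hlam.1 _
        by_contra hne
        exact he2 (Finset.mem_filter.mpr ⟨Finset.mem_compl.mpr he1,
          lt_of_le_of_ne hnn (Ne.symm hne)⟩)
    have hST : S ⊂ T := by
      refine ⟨Finset.subset_union_left, ?_⟩
      intro hsub
      have hbx0 : 0 < b x0.1 := by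
        rw [hbSc' x0.1 (Finset.mem_compl.mp x0.2)]
        simpa [Subtype.coe_eta] using hx0
      have hx0T : (x0 : E) ∈ T := Finset.mem_union_right _
        (Finset.mem_filter.mpr ⟨x0.2, hbx0⟩)
      exact (Finset.mem_compl.mp x0.2) (hsub hx0T)
    exact absurd (hmax T hPT) (not_le.mpr (Finset.card_lt_card hST))
  -- separate 0 from C
  obtain ⟨f, u, hu0, hub⟩ := geometric_hahn_banach_point_closed hCcvx hCclosed h0C
  have hupos : 0 < u := by simpa using hu0
  have hfU : ∀ z ∈ U, f z = 0 := by
    intro z hz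
    by_contra hfz
    have hmem' := hub _ (hmem e0 he0 (((u - f (v e0)) / f z) • z) (U.smul_mem _ hz))
    rw [map_add, map_smul, smul_eq_mul, div_mul_cancel₀ _ hfz] at hmem'
    linarith
  have hfS : ∀ e ∈ S, f (v e) = 0 := fun e he =>
    hfU _ (Submodule.subset_span ⟨⟨e, he⟩, rfl⟩)
  have hfSc : ∀ e, e ∉ S → u < f (v e) := by
    intro e he
    have := hub _ (hmem e he 0 U.zero_mem)
    simpa using this
  set w : Fin d → ℝ := fun i => -f (Pi.single i 1) with hwdef
  have hdot : ∀ x : Fin d → ℝ, (∑ i, w i * x i) = -f x := by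
    intro x
    have hfx : f x = ∑ i, x i * f (Pi.single i 1) := by
      conv_lhs => rw [← Finset.univ_sum_single x]
      rw [map_sum]
      apply Finset.sum_congr rfl
      intro i _
      have hsingle : Pi.single i (x i) = x i • (Pi.single i 1 : Fin d → ℝ) := by
        funext j
        rcases eq_or_ne j i with rfl | hj
        · simp
        · simp [Pi.single_eq_of_ne hj]
      rw [hsingle, map_smul, smul_eq_mul]
    rw [hfx, ← Finset.sum_neg_distrib]
    apply Finset.sum_congr rfl
    intro i _
    rw [hwdef]
    ring
  refine ⟨w, e0, ?_, fun e => ?_⟩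
  · rw [hdot]
    have := hfSc e0 he0
    linarith
  · rw [hdot]
    by_cases he : e ∈ S
    · rw [hfS e he]
      norm_num
    · have := hfSc e he
      linarith

end Aux

/-- If a reaction network is not consistent, then it is not endotactic: if no positive
combination of the reaction vectors vanishes, then there is a direction `w` and an edge
`ei` with `w · v ei < 0` such that no edge `ej` satisfies both `w · (s ej - s ei) < 0`
and `w · v ej > 0`. -/
theorem not_consistent_not_endotactic {d : ℕ} {E : Type*} [Fintype E] [Nonempty E]
    (s v : E → (Fin d → ℝ)) (hv : ∀ e, v e ≠ 0)
    (h : ¬ ∃ a : E → ℝ, (∀ e, 0 < a e) ∧ ∑ e, a e • v e = 0) :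
    ∃ (w : Fin d → ℝ) (ei : E), dotp w (v ei) < 0 ∧
      ∀ ej : E, ¬ (dotp w (s ej - s ei) < 0 ∧ 0 < dotp w (v ej)) := by
  obtain ⟨w, e0, h0, hall⟩ := stiemke_aux v h
  exact ⟨w, e0, h0, fun ej hj => absurd (hall ej) (not_le.mpr hj.2)⟩
end
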